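/- arXiv:1107.2554 — 7 statements merged into one kernel-verified Lean document; each statement's English description precedes it below -/
import Mathlib

section
/- In the iterative well-linked decomposition with parameters k > 8, γ = Θ(log²k), and α = 1/(2¹¹·γ·log k): starting from a single cluster S and repeatedly replacing a cluster W by the two sides (X,Y) of a (k,α)-violating cut, every partition 𝒲 produced during the process satisfies Σ_{W∈𝒲} |out(W)| ≤ |out(S)|·(1 + 1/(64γ)). -/
open Finset

/-- Edges of `G` with exactly one endpoint in `A`. -/
def outF {V : Type*} [Fintype V] [DecidableEq V] (G : SimpleGraph V)
    [DecidableRel G.Adj] (A : Finset V) : Finset (Sym2 V) :=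
  G.edgeFinset.filter fun e => ∃ u v, e = s(u, v) ∧ u ∈ A ∧ v ∉ A

/-- Edges of `G` with one endpoint in `A` and the other in `B`. -/
def betweenF {V : Type*} [Fintype V] [DecidableEq V] (G : SimpleGraph V)
    [DecidableRel G.Adj] (A B : Finset V) : Finset (Sym2 V) :=
  G.edgeFinset.filter fun e => ∃ u v, e = s(u, v) ∧ u ∈ A ∧ v ∈ B

/-- `(X,Y)` is a `(k,α)`-violating cut of the cluster `X ∪ Y`. -/
def Violating {V : Type*} [Fintype V] [DecidableEq V] (G : SimpleGraph V)
    [DecidableRel G.Adj] (α : ℝ) (k : ℕ) (X Y : Finset V) : Prop :=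
  ∃ T₁ T₂ : Finset (Sym2 V),
    T₁ ⊆ outF G X ∩ outF G (X ∪ Y) ∧ T₂ ⊆ outF G Y ∩ outF G (X ∪ Y) ∧
    Disjoint T₁ T₂ ∧ T₁.card + T₂.card ≤ k ∧
    ((betweenF G X Y).card : ℝ) < α * min (T₁.card : ℝ) (T₂.card : ℝ)

/-- One step of the iterative well-linked decomposition: replace a cluster `W` of the
current partition by the two sides of a `(k,α)`-violating cut of `W`. -/
def DecompStep {V : Type*} [Fintype V] [DecidableEq V] (G : SimpleGraph V)
    [DecidableRel G.Adj] (α : ℝ) (k : ℕ) (𝒲 𝒲' : Finset (Finset V)) : Prop :=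
  ∃ W ∈ 𝒲, ∃ X Y : Finset V, X.Nonempty ∧ Y.Nonempty ∧ Disjoint X Y ∧ X ∪ Y = W ∧
    Violating G α k X Y ∧ 𝒲' = insert X (insert Y (𝒲.erase W))

/-! Every boundary edge of a cluster with `x` boundary edges is given the weight `1 + h(x)`, where
`h(x) = 10α·log₂ min(x, k) + 12α·(1 - k / max(x, k))` is `chargeRate α k x`. The total weight never
increases along the decomposition. Cutting `W`, with `a + b` boundary edges, into sides with `a + m`
and `b + m` boundary edges, where `m < α·min(a, b)` and `2m < αk`, the `x = min(a, b)` edges of the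
smaller side see their rate rise from at most `h((1 + α)x)` to at least `h(2x)`, which is a gain of
at least `min(4α, 2αk/x)`: through the logarithmic term while `x ≤ 2k/3`, through the saturating
term beyond. This pays for the `2m` new edges, each of weight at most `2`. Since
`0 ≤ h ≤ 10α·log₂ k + 12α ≤ 1/(64γ)`, the theorem follows. -/

section Boundary

variable {V : Type*} [Fintype V] [DecidableEq V] (G : SimpleGraph V) [DecidableRel G.Adj]

lemma mk_mem_outF {A : Finset V} {u v : V} :
    s(u, v) ∈ outF G A ↔ G.Adj u v ∧ (u ∈ A ∧ v ∉ A ∨ v ∈ A ∧ u ∉ A) := by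
  simp only [outF, mem_filter, SimpleGraph.mem_edgeFinset, SimpleGraph.mem_edgeSet, Sym2.eq_iff]
  constructor
  · rintro ⟨hadj, a, b, ⟨rfl, rfl⟩ | ⟨rfl, rfl⟩, ha, hb⟩ <;> tauto
  · rintro ⟨hadj, ⟨hu, hv⟩ | ⟨hv, hu⟩⟩
    exacts [⟨hadj, u, v, .inl ⟨rfl, rfl⟩, hu, hv⟩, ⟨hadj, v, u, .inr ⟨rfl, rfl⟩, hv, hu⟩]

lemma mk_mem_betweenF {A B : Finset V} {u v : V} :
    s(u, v) ∈ betweenF G A B ↔ G.Adj u v ∧ (u ∈ A ∧ v ∈ B ∨ v ∈ A ∧ u ∈ B) := by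
  simp only [betweenF, mem_filter, SimpleGraph.mem_edgeFinset, SimpleGraph.mem_edgeSet,
    Sym2.eq_iff]
  constructor
  · rintro ⟨hadj, a, b, ⟨rfl, rfl⟩ | ⟨rfl, rfl⟩, ha, hb⟩ <;> tauto
  · rintro ⟨hadj, ⟨hu, hv⟩ | ⟨hv, hu⟩⟩
    exacts [⟨hadj, u, v, .inl ⟨rfl, rfl⟩, hu, hv⟩, ⟨hadj, v, u, .inr ⟨rfl, rfl⟩, hv, hu⟩]

lemma outF_sdiff_outF_union {X Y : Finset V} (h : Disjoint X Y) :
    outF G X \ outF G (X ∪ Y) = betweenF G X Y := by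
  ext e
  induction e using Sym2.ind with
  | h u v =>
    have hu : u ∈ X → u ∉ Y := fun hx => disjoint_left.mp h hx
    have hv : v ∈ X → v ∉ Y := fun hx => disjoint_left.mp h hx
    simp only [mem_sdiff, mk_mem_outF, mk_mem_betweenF, mem_union]
    tauto

lemma card_outF_left {X Y : Finset V} (h : Disjoint X Y) :
    #(outF G X) = #(outF G X ∩ outF G (X ∪ Y)) + #(betweenF G X Y) := by
  rw [← outF_sdiff_outF_union G h, add_comm, card_sdiff_add_card_inter]

lemma card_outF_union {X Y : Finset V} (h : Disjoint X Y) :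
    #(outF G (X ∪ Y)) = #(outF G X ∩ outF G (X ∪ Y)) + #(outF G Y ∩ outF G (X ∪ Y)) := by
  rw [← card_union_of_disjoint, ← union_inter_distrib_right, inter_eq_right.mpr]
  · intro e
    induction e using Sym2.ind with
    | h u v => simp only [mem_union, mk_mem_outF]; tauto
  · rw [disjoint_left]
    intro e
    induction e using Sym2.ind with
    | h u v =>
      have hu : u ∈ X → u ∉ Y := fun hx => disjoint_left.mp h hx
      have hv : v ∈ X → v ∉ Y := fun hx => disjoint_left.mp h hx
      simp only [mem_union, mem_inter, mk_mem_outF]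
      tauto

lemma betweenF_comm (A B : Finset V) : betweenF G A B = betweenF G B A := by
  ext e
  induction e using Sym2.ind with
  | h u v => simp only [mk_mem_betweenF]; tauto

lemma card_outF_right {X Y : Finset V} (h : Disjoint X Y) :
    #(outF G Y) = #(outF G Y ∩ outF G (X ∪ Y)) + #(betweenF G X Y) := by
  rw [union_comm, betweenF_comm]
  exact card_outF_left G h.symm

end Boundary

lemma sum_insert_le_add {β : Type*} [DecidableEq β] {f : β → ℝ} {a : β} (ha : 0 ≤ f a)
    (s : Finset β) : ∑ b ∈ insert a s, f b ≤ f a + ∑ b ∈ s, f b := by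
  by_cases h : a ∈ s
  · rw [insert_eq_of_mem h]
    exact le_add_of_nonneg_left ha
  · rw [sum_insert h]

lemma sum_insert_insert_erase_le {β : Type*} [DecidableEq β] {f : β → ℝ} (hf : ∀ b, 0 ≤ f b)
    {s : Finset β} {a b w : β} (hw : w ∈ s) (h : f a + f b ≤ f w) :
    ∑ c ∈ insert a (insert b (s.erase w)), f c ≤ ∑ c ∈ s, f c := by
  have := sum_insert_le_add (hf a) (insert b (s.erase w))
  have := sum_insert_le_add (hf b) (s.erase w)
  rw [← add_sum_erase s f hw]
  linarith

lemma logb_min_le_logb_min {K x y : ℝ} (hK : 0 < K) (hx : 0 < x) (hxy : x ≤ y) :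
    Real.logb 2 (min x K) ≤ Real.logb 2 (min y K) :=
  Real.logb_le_logb_of_le one_lt_two (lt_min hx hK) (min_le_min_right K hxy)

lemma div_max_le_div_max {K x y : ℝ} (hK : 0 < K) (hxy : x ≤ y) :
    K / max y K ≤ K / max x K :=
  div_le_div_of_nonneg_left hK.le (lt_max_of_lt_right hK) (max_le_max_right K hxy)

lemma logb_one_add_le {α : ℝ} (hα : 0 ≤ α) (hα' : α ≤ 1 / 16) :
    Real.logb 2 (1 + α) ≤ 1 / 10 := by
  have hlog : Real.log (1 + α) ≤ α := by
    linarith [Real.log_le_sub_one_of_pos (by linarith : (0 : ℝ) < 1 + α)]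
  rw [Real.logb, div_le_iff₀ (Real.log_pos one_lt_two)]
  linarith [Real.log_two_gt_d9]

lemma one_half_le_logb_three_halves : 1 / 2 ≤ Real.logb 2 (3 / 2 : ℝ) := by
  have h : Real.logb 2 2 ≤ Real.logb 2 ((3 / 2 : ℝ) ^ 2) :=
    Real.logb_le_logb_of_le one_lt_two (by norm_num) (by norm_num)
  rw [Real.logb_self_eq_one one_lt_two, Real.logb_pow] at h
  push_cast at h
  linarith

lemma two_fifths_le_logb_min_sub_logb_min {α K x : ℝ} (hα : 0 ≤ α) (hα' : α ≤ 1 / 16) (hx : 0 < x)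
    (hK : 3 / 2 * x ≤ K) :
    2 / 5 ≤ Real.logb 2 (min (2 * x) K) - Real.logb 2 (min ((1 + α) * x) K) := by
  have hup : Real.logb 2 (3 / 2 * x) ≤ Real.logb 2 (min (2 * x) K) :=
    Real.logb_le_logb_of_le one_lt_two (by positivity) (le_min (by linarith) hK)
  have hlow : Real.logb 2 (min ((1 + α) * x) K) ≤ Real.logb 2 ((1 + α) * x) :=
    Real.logb_le_logb_of_le one_lt_two (lt_min (by positivity) (by linarith)) (min_le_left _ _)
  rw [Real.logb_mul (by norm_num) hx.ne'] at hup
  rw [Real.logb_mul (by positivity) hx.ne'] at hlow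
  linarith [one_half_le_logb_three_halves, logb_one_add_le hα hα']

lemma div_six_mul_le_div_max_sub_div_max {α K x : ℝ} (hα : α ≤ 1 / 2) (hx : 0 < x) (hK₀ : 0 < K)
    (hK : K ≤ 3 / 2 * x) :
    K / (6 * x) ≤ K / max ((1 + α) * x) K - K / max (2 * x) K := by
  have hmax : max ((1 + α) * x) K ≤ 3 / 2 * x := max_le (by nlinarith) hK
  have hlow : K / (3 / 2 * x) ≤ K / max ((1 + α) * x) K :=
    div_le_div_of_nonneg_left hK₀.le (lt_max_of_lt_right hK₀) hmax
  rw [max_eq_left (by linarith : K ≤ 2 * x)]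
  have : K / (3 / 2 * x) - K / (2 * x) = K / (6 * x) := by field_simp; ring
  linarith

noncomputable def chargeRate (α K x : ℝ) : ℝ :=
  10 * α * Real.logb 2 (min x K) + 12 * α * (1 - K / max x K)

section ChargeRate

variable {α K : ℝ}

lemma chargeRate_nonneg (hα : 0 ≤ α) (hK : 1 ≤ K) {x : ℝ} (hx : 1 ≤ x) :
    0 ≤ chargeRate α K x := by
  have hlog : 0 ≤ Real.logb 2 (min x K) := Real.logb_nonneg one_lt_two (le_min hx hK)
  have hsat : K / max x K ≤ 1 := div_le_one_of_le₀ (le_max_right _ _) (by positivity)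
  unfold chargeRate
  have := mul_nonneg (mul_nonneg (by norm_num : (0:ℝ) ≤ 10) hα) hlog
  have := mul_nonneg (mul_nonneg (by norm_num : (0:ℝ) ≤ 12) hα) (sub_nonneg.mpr hsat)
  linarith

lemma chargeRate_le (hα : 0 ≤ α) (hK : 0 < K) {x : ℝ} (hx : 0 < x) :
    chargeRate α K x ≤ 10 * α * Real.logb 2 K + 12 * α := by
  have hlog : Real.logb 2 (min x K) ≤ Real.logb 2 K :=
    Real.logb_le_logb_of_le one_lt_two (lt_min hx hK) (min_le_right _ _)
  have hsat : 0 ≤ K / max x K := by positivity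
  unfold chargeRate
  nlinarith

lemma chargeRate_mono (hα : 0 ≤ α) (hK : 0 < K) {x y : ℝ} (hx : 0 < x) (hxy : x ≤ y) :
    chargeRate α K x ≤ chargeRate α K y := by
  have hlog := logb_min_le_logb_min hK hx hxy
  have hsat := div_max_le_div_max hK hxy
  unfold chargeRate
  gcongr

lemma chargeRate_gain (hα : 0 ≤ α) (hα' : α ≤ 1 / 16) (hK : 0 < K) {x : ℝ} (hx : 0 < x) :
    min (4 * α) (2 * α * K / x) ≤ chargeRate α K (2 * x) - chargeRate α K ((1 + α) * x) := by
  have hlog := logb_min_le_logb_min hK (by positivity) (by nlinarith : (1 + α) * x ≤ 2 * x)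
  have hsat := div_max_le_div_max hK (by nlinarith : (1 + α) * x ≤ 2 * x)
  unfold chargeRate
  rcases le_total (3 / 2 * x) K with hsmall | hlarge
  · have hgain := two_fifths_le_logb_min_sub_logb_min hα hα' hx hsmall
    nlinarith [min_le_left (4 * α) (2 * α * K / x)]
  · have hgain := div_six_mul_le_div_max_sub_div_max (α := α) (by linarith) hx hK hlarge
    have : 12 * α * (K / (6 * x)) = 2 * α * K / x := by ring
    nlinarith [min_le_right (4 * α) (2 * α * K / x)]

end ChargeRate

noncomputable def potential (α K x : ℝ) : ℝ := x * (1 + chargeRate α K x)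

section Potential

variable {α K : ℝ}

lemma potential_natCast_nonneg (hα : 0 ≤ α) (hK : 1 ≤ K) (n : ℕ) : 0 ≤ potential α K n := by
  rcases Nat.eq_zero_or_pos n with rfl | hn
  · simp [potential]
  · have := chargeRate_nonneg hα hK (Nat.one_le_cast.mpr hn)
    unfold potential
    positivity

lemma natCast_le_potential (hα : 0 ≤ α) (hK : 1 ≤ K) (n : ℕ) : (n : ℝ) ≤ potential α K n := by
  rcases Nat.eq_zero_or_pos n with rfl | hn
  · simp [potential]
  · have := chargeRate_nonneg hα hK (Nat.one_le_cast.mpr hn)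
    unfold potential
    nlinarith

lemma potential_le (hα : 0 ≤ α) (hK : 0 < K) {x : ℝ} (hx : 0 ≤ x) :
    potential α K x ≤ x * (1 + (10 * α * Real.logb 2 K + 12 * α)) := by
  rcases hx.eq_or_lt with rfl | hx
  · simp [potential]
  · unfold potential
    gcongr
    exact chargeRate_le hα hK hx

lemma potential_split_le (hα : 0 < α) (hα' : α ≤ 1 / 16) (hK : 0 < K)
    (hrate : 10 * α * Real.logb 2 K + 12 * α ≤ 1) {x y m : ℝ} (hm : 0 ≤ m)
    (hmx : m < α * x) (hmy : m < α * y) (hmK : 2 * m < α * K) :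
    potential α K (x + m) + potential α K (y + m) ≤ potential α K (x + y) := by
  wlog hxy : x ≤ y generalizing x y
  · have := this hmy hmx (by linarith)
    rw [add_comm y x] at this
    linarith
  have hx : 0 < x := pos_of_mul_pos_right (hm.trans_lt hmx) hα.le
  have hmx' : m ≤ x := by nlinarith
  set r := chargeRate α K (x + y)
  have hr : r ≤ 1 := (chargeRate_le hα.le hK (by linarith)).trans hrate
  have hgain := chargeRate_gain hα.le hα' hK hx
  have h2x : chargeRate α K (2 * x) ≤ r :=
    chargeRate_mono hα.le hK (by linarith) (by linarith)
  have hxm : chargeRate α K (x + m) ≤ chargeRate α K ((1 + α) * x) :=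
    chargeRate_mono hα.le hK (by linarith) (by linarith)
  have hxr : chargeRate α K (x + m) ≤ r :=
    chargeRate_mono hα.le hK (by linarith) (by linarith)
  have hyr : chargeRate α K (y + m) ≤ r :=
    chargeRate_mono hα.le hK (by linarith) (by linarith)
  have hmin : 4 * m ≤ x * min (4 * α) (2 * α * K / x) := by
    rw [mul_min_of_nonneg _ _ hx.le, mul_div_cancel₀ _ hx.ne']
    exact le_min (by linarith) (by linarith)
  have hsmall : 4 * m ≤ (x + m) * (r - chargeRate α K (x + m)) :=
    calc 4 * m ≤ x * (r - chargeRate α K (x + m)) :=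
          hmin.trans (mul_le_mul_of_nonneg_left (by linarith) hx.le)
      _ ≤ (x + m) * (r - chargeRate α K (x + m)) := by gcongr; linarith
  have hlarge : 0 ≤ (y + m) * (r - chargeRate α K (y + m)) :=
    mul_nonneg (by linarith) (by linarith)
  have hsplit : potential α K (x + y) - potential α K (x + m) - potential α K (y + m)
      = (x + m) * (r - chargeRate α K (x + m)) + (y + m) * (r - chargeRate α K (y + m))
        - 2 * m * (1 + r) := by
    unfold potential; ring
  nlinarith

end Potential

lemma three_le_logb_two {x : ℝ} (hx : 8 ≤ x) : 3 ≤ Real.logb 2 x := by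
  have h8 : Real.logb 2 8 = 3 := by
    rw [show (8 : ℝ) = 2 ^ (3 : ℕ) by norm_num, Real.logb_pow, Real.logb_self_eq_one one_lt_two]
    norm_num
  exact h8 ▸ Real.logb_le_logb_of_le one_lt_two (by norm_num) hx

lemma alpha_bounds_of_eq {α γ L : ℝ} (hγ : 1 ≤ γ) (hL : 3 ≤ L) (hα : α = 1 / (2 ^ 11 * γ * L)) :
    0 < α ∧ α ≤ 1 / 16 ∧ 10 * α * L + 12 * α ≤ 1 / (64 * γ) := by
  have hγ₀ : 0 < γ := by linarith
  have hL₀ : 0 < L := by linarith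
  subst hα
  refine ⟨by positivity, ?_, ?_⟩
  · rw [div_le_div_iff₀ (by positivity) (by norm_num)]
    nlinarith
  · have h : 10 * (1 / (2 ^ 11 * γ * L)) * L + 12 * (1 / (2 ^ 11 * γ * L))
        = (10 + 12 / L) / (2 ^ 11 * γ) := by field_simp
    have : 12 / L ≤ 4 := by rw [div_le_iff₀ hL₀]; linarith
    rw [h, div_le_div_iff₀ (by positivity) (by positivity)]
    nlinarith

section Decomposition

variable {V : Type*} [Fintype V] [DecidableEq V] {G : SimpleGraph V} [DecidableRel G.Adj]
  {α : ℝ} {k : ℕ}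

lemma sum_potential_le_of_decompStep (hα : 0 < α) (hα' : α ≤ 1 / 16) (hk : 1 ≤ (k : ℝ))
    (hrate : 10 * α * Real.logb 2 k + 12 * α ≤ 1) {𝒱 𝒲 : Finset (Finset V)}
    (h : DecompStep G α k 𝒱 𝒲) :
    ∑ W ∈ 𝒲, potential α k #(outF G W) ≤ ∑ W ∈ 𝒱, potential α k #(outF G W) := by
  obtain ⟨W, hW, X, Y, -, -, hXY, rfl, ⟨T₁, T₂, hT₁, hT₂, -, hTk, hm⟩, rfl⟩ := h
  refine sum_insert_insert_erase_le (fun _ => potential_natCast_nonneg hα.le hk _) hW ?_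
  have ht₁ : (#T₁ : ℝ) ≤ #(outF G X ∩ outF G (X ∪ Y)) := by exact_mod_cast card_le_card hT₁
  have ht₂ : (#T₂ : ℝ) ≤ #(outF G Y ∩ outF G (X ∪ Y)) := by exact_mod_cast card_le_card hT₂
  have htk : (#T₁ : ℝ) + #T₂ ≤ k := by exact_mod_cast hTk
  have hm₁ := hm.trans_le (mul_le_mul_of_nonneg_left (min_le_left _ _) hα.le)
  have hm₂ := hm.trans_le (mul_le_mul_of_nonneg_left (min_le_right _ _) hα.le)
  rw [card_outF_left G hXY, card_outF_right G hXY, card_outF_union G hXY]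
  push_cast
  apply potential_split_le hα hα' (by linarith) hrate (Nat.cast_nonneg _) <;> nlinarith

lemma sum_potential_le_of_reflTransGen (hα : 0 < α) (hα' : α ≤ 1 / 16) (hk : 1 ≤ (k : ℝ))
    (hrate : 10 * α * Real.logb 2 k + 12 * α ≤ 1) {S : Finset V} {𝒲 : Finset (Finset V)}
    (h : Relation.ReflTransGen (DecompStep G α k) {S} 𝒲) :
    ∑ W ∈ 𝒲, potential α k #(outF G W) ≤ potential α k #(outF G S) := by
  induction h with
  | refl => simp
  | tail _ hstep ih => exact (sum_potential_le_of_decompStep hα hα' hk hrate hstep).trans ih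

end Decomposition

/-- In the iterative well-linked decomposition with `k > 8`, `γ ≥ 1` and
`α = 1/(2¹¹·γ·log k)`, every partition `𝒲` produced during the process satisfies
`∑_{W∈𝒲} |out(W)| ≤ |out(S)|·(1 + 1/(64γ))`. -/
theorem stmt_8 {V : Type*} [Fintype V] [DecidableEq V] (G : SimpleGraph V)
    [DecidableRel G.Adj] (S : Finset V) (k γ : ℕ) (hk : 8 < k) (hγ : 1 ≤ γ)
    (α : ℝ) (hα : α = 1 / (2 ^ 11 * γ * Real.logb 2 k)) :
    ∀ 𝒲 : Finset (Finset V),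
      Relation.ReflTransGen (DecompStep G α k) {S} 𝒲 →
      ∑ W ∈ 𝒲, ((outF G W).card : ℝ) ≤
        ((outF G S).card : ℝ) * (1 + 1 / (64 * γ)) := by
  intro 𝒲 h
  have hk8 : (8 : ℝ) ≤ k := by exact_mod_cast hk.le
  have hγ₁ : (1 : ℝ) ≤ γ := by exact_mod_cast hγ
  obtain ⟨hα₀, hα', hrate⟩ := alpha_bounds_of_eq hγ₁ (three_le_logb_two hk8) hα
  have hrate₁ : 10 * α * Real.logb 2 k + 12 * α ≤ 1 :=
    hrate.trans (div_le_one_of_le₀ (by linarith) (by positivity))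
  have hk₁ : (1 : ℝ) ≤ k := by linarith
  calc ∑ W ∈ 𝒲, (#(outF G W) : ℝ)
      ≤ ∑ W ∈ 𝒲, potential α k #(outF G W) :=
        sum_le_sum fun W _ => natCast_le_potential hα₀.le hk₁ _
    _ ≤ potential α k #(outF G S) := sum_potential_le_of_reflTransGen hα₀ hα' hk₁ hrate₁ h
    _ ≤ #(outF G S) * (1 + (10 * α * Real.logb 2 k + 12 * α)) :=
        potential_le hα₀.le (by linarith) (Nat.cast_nonneg _)
    _ ≤ #(outF G S) * (1 + 1 / (64 * γ)) := by gcongr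
end

section
/- Let Z be a multigraph on γ vertices such that every vertex v has weighted degree C(v) with (1 − 1/γ²)·ℓ ≤ C(v) ≤ ℓ, and between every pair of distinct vertices the total edge capacity is at least (1 − 1/γ)·ℓ of max-flow value (i.e., every pair of vertices can send (1−1/γ)ℓ units of flow respecting edge capacities). Then setting x_e = ((γ−1)/γ)·(c(e)/C(v) + c(e)/C(u)) for each edge e=(u,v) yields a feasible fractional solution to the degree-bounded spanning tree LP with degree bound B = 2: Σ_e x_e = γ − 1; for every S ⊂ V(Z) with |S| ≥ 2, Σ_{e∈E(S)} x_e ≤ |S| − 1; and for every vertex v, Σ_{e∈δ(v)} x_e ≤ 2. -/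
open Finset

/-- Edges of the multigraph incident on `v`. -/
def deltaV {V E : Type*} [Fintype E] [DecidableEq V] (ends : E → V × V) (v : V) :
    Finset E :=
  univ.filter fun e => (ends e).1 = v ∨ (ends e).2 = v

/-- Weighted degree `C(v) = ∑_{e ∈ δ(v)} c(e)`. -/
noncomputable def Cdeg {V E : Type*} [Fintype E] [DecidableEq V] (ends : E → V × V)
    (c : E → ℝ) (v : V) : ℝ :=
  ∑ e ∈ deltaV ends v, c e

/-- Edges with both endpoints in `S`. -/
def insideE {V E : Type*} [Fintype E] [DecidableEq V] (ends : E → V × V)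
    (S : Finset V) : Finset E :=
  univ.filter fun e => (ends e).1 ∈ S ∧ (ends e).2 ∈ S

/-- Edges with exactly one endpoint in `S`. -/
def crossE {V E : Type*} [Fintype E] [DecidableEq V] (ends : E → V × V)
    (S : Finset V) : Finset E :=
  univ.filter fun e =>
    ((ends e).1 ∈ S ∧ (ends e).2 ∉ S) ∨ ((ends e).1 ∉ S ∧ (ends e).2 ∈ S)

/-- The LP value `x_e = ((γ−1)/γ)·(c(e)/C(u) + c(e)/C(v))` for an edge `e = (u,v)`. -/
noncomputable def xLP {V E : Type*} [Fintype E] [DecidableEq V] (ends : E → V × V)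
    (c : E → ℝ) (γ : ℕ) (e : E) : ℝ :=
  ((γ : ℝ) - 1) / γ *
    (c e / Cdeg ends c (ends e).1 + c e / Cdeg ends c (ends e).2)

/-!
Each vertex `v` spreads the weight `k = (γ-1)/γ` over its incident edges in proportion to
`c(e)/C(v)`, and `x_e` is the sum of the two shares of `e`; hence `∑ x_e = kγ`. For `v ∈ S`,
the share `v` keeps inside `E(S)` is `1 - c(δ(v) ∩ δ(S))/C(v) ≤ 1 - c(δ(v) ∩ δ(S))/ℓ`, and the
cross terms add up to the cut `c(δ(S)) ≥ kℓ`, so `∑_{E(S)} x_e ≤ k(|S| - k) ≤ |S| - 1` once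
`|S| ≥ 2`. At a vertex, its own shares sum to `k` and the other endpoints contribute at most
`C(v)/((1 - 1/γ²)ℓ) ≤ γ²/(γ² - 1)` times `k`, for a total `k + γ/(γ+1) ≤ 2`.
-/

theorem natCast_sub_one_div_nonneg (γ : ℕ) : 0 ≤ ((γ : ℝ) - 1) / γ := by
  rcases Nat.eq_zero_or_pos γ with rfl | hγ
  · simp
  · exact div_nonneg (sub_nonneg.mpr (Nat.one_le_cast.mpr hγ)) γ.cast_nonneg

theorem sub_one_div_mul_sub_le {g s : ℝ} (hg : 0 < g) (hs : 2 ≤ s) :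
    (g - 1) / g * (s - (1 - 1 / g)) ≤ s - 1 := by
  have ht : 0 < 1 / g := by positivity
  rw [show (g - 1) / g = 1 - 1 / g by field_simp]
  nlinarith [mul_nonneg ht.le (by linarith : (0:ℝ) ≤ s - 2 + 1 / g)]

theorem sub_one_div_mul_one_add_div_le_two {g ℓ : ℝ} (hg : 2 ≤ g) (hℓ : 0 < ℓ) :
    (g - 1) / g * (1 + ℓ / ((1 - 1 / g ^ 2) * ℓ)) ≤ 2 := by
  have hg0 : 0 < g := by linarith
  have h : (g - 1) / g * (1 + ℓ / ((1 - 1 / g ^ 2) * ℓ)) = (g - 1) / g + g / (g + 1) := by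
    have : g ^ 2 - 1 ≠ 0 := by nlinarith
    field_simp
    ring
  rw [h]
  have h1 : (g - 1) / g ≤ 1 := by rw [div_le_one hg0]; linarith
  have h2 : g / (g + 1) ≤ 1 := by rw [div_le_one (by linarith)]; linarith
  linarith

section Multigraph

variable {V E : Type*} [Fintype E] [DecidableEq V] (ends : E → V × V)

theorem sum_sum_inter_deltaV [DecidableEq E] {M : Type*} [AddCommMonoid M] (S : Finset V)
    (T : Finset E) (F : V → E → M) :
    ∑ v ∈ S, ∑ e ∈ T ∩ deltaV ends v, F v e
      = ∑ e ∈ T, ∑ v ∈ S ∩ {(ends e).1, (ends e).2}, F v e :=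
  Finset.sum_comm' fun v e => by
    simp only [deltaV, mem_inter, mem_filter, mem_univ, true_and, mem_insert, mem_singleton]
    tauto

theorem sum_sum_inter_deltaV_of_loopless [DecidableEq E] {M : Type*} [AddCommMonoid M]
    (hnoloop : ∀ e, (ends e).1 ≠ (ends e).2) (S : Finset V) (T : Finset E)
    (hT : ∀ e ∈ T, (ends e).1 ∈ S ∧ (ends e).2 ∈ S) (F : V → E → M) :
    ∑ v ∈ S, ∑ e ∈ T ∩ deltaV ends v, F v e
      = ∑ e ∈ T, (F (ends e).1 e + F (ends e).2 e) := by
  rw [sum_sum_inter_deltaV]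
  refine sum_congr rfl fun e he => ?_
  rw [inter_eq_right.mpr (insert_subset_iff.mpr ⟨(hT e he).1, by simpa using (hT e he).2⟩),
    sum_pair (hnoloop e)]

theorem sum_sum_crossE_inter_deltaV [DecidableEq E] {M : Type*} [AddCommMonoid M] (S : Finset V)
    (f : E → M) :
    ∑ v ∈ S, ∑ e ∈ crossE ends S ∩ deltaV ends v, f e = ∑ e ∈ crossE ends S, f e := by
  rw [sum_sum_inter_deltaV]
  refine sum_congr rfl fun e he => ?_
  have hone : (S ∩ {(ends e).1, (ends e).2}).card = 1 := by
    simp only [crossE, mem_filter, mem_univ, true_and] at he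
    rcases he with ⟨h1, h2⟩ | ⟨h1, h2⟩ <;>
      simp [inter_insert_of_mem, inter_insert_of_notMem, h1, h2]
  rw [sum_const, hone, one_smul]

theorem sum_insideE_inter_add_sum_crossE_inter [DecidableEq E] {M : Type*} [AddCommMonoid M]
    {S : Finset V} {v : V} (hv : v ∈ S) (f : E → M) :
    ∑ e ∈ insideE ends S ∩ deltaV ends v, f e + ∑ e ∈ crossE ends S ∩ deltaV ends v, f e
      = ∑ e ∈ deltaV ends v, f e := by
  rw [← sum_union]
  · congr 1
    ext e
    simp only [insideE, crossE, deltaV, mem_union, mem_inter, mem_filter, mem_univ, true_and]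
    constructor
    · tauto
    · rintro (rfl | rfl) <;> tauto
  · rw [disjoint_left]
    simp only [insideE, crossE, mem_inter, mem_filter, mem_univ, true_and]
    tauto

theorem insideE_singleton_eq_empty (hnoloop : ∀ e, (ends e).1 ≠ (ends e).2) (a : V) :
    insideE ends {a} = ∅ := by
  ext e
  simp only [insideE, mem_filter, mem_univ, true_and, mem_singleton, notMem_empty, iff_false]
  exact fun ⟨h1, h2⟩ => hnoloop e (h1.trans h2.symm)

variable (c : E → ℝ)

theorem sum_deltaV_div_Cdeg {v : V} (hv : Cdeg ends c v ≠ 0) :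
    ∑ e ∈ deltaV ends v, c e / Cdeg ends c v = 1 := by
  rw [← sum_div]
  exact div_self hv

theorem sum_xLP_eq [DecidableEq E] (hnoloop : ∀ e, (ends e).1 ≠ (ends e).2) (γ : ℕ)
    (S : Finset V) (T : Finset E) (hT : ∀ e ∈ T, (ends e).1 ∈ S ∧ (ends e).2 ∈ S) :
    ∑ e ∈ T, xLP ends c γ e
      = ((γ : ℝ) - 1) / γ * ∑ v ∈ S, (∑ e ∈ T ∩ deltaV ends v, c e) / Cdeg ends c v := by
  simp only [sum_div]
  rw [sum_sum_inter_deltaV_of_loopless ends hnoloop S T hT, mul_sum]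
  rfl

theorem sum_insideE_div_Cdeg_le [DecidableEq E] {ℓ : ℝ} (hc : ∀ e, 0 ≤ c e) {S : Finset V}
    {v : V} (hv : v ∈ S) (hpos : 0 < Cdeg ends c v) (hub : Cdeg ends c v ≤ ℓ) :
    (∑ e ∈ insideE ends S ∩ deltaV ends v, c e) / Cdeg ends c v
      ≤ 1 - (∑ e ∈ crossE ends S ∩ deltaV ends v, c e) / ℓ := by
  calc (∑ e ∈ insideE ends S ∩ deltaV ends v, c e) / Cdeg ends c v
      = 1 - (∑ e ∈ crossE ends S ∩ deltaV ends v, c e) / Cdeg ends c v := by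
        rw [eq_sub_iff_add_eq, ← add_div, sum_insideE_inter_add_sum_crossE_inter ends hv,
          ← Cdeg, div_self hpos.ne']
    _ ≤ 1 - (∑ e ∈ crossE ends S ∩ deltaV ends v, c e) / ℓ := by
        gcongr
        exact sum_nonneg fun e _ => hc e

theorem add_div_Cdeg_le_of_mem_deltaV {m : ℝ} (hm : 0 < m) (hlb : ∀ u, m ≤ Cdeg ends c u)
    {e : E} (hce : 0 ≤ c e) {v : V} (he : e ∈ deltaV ends v) :
    c e / Cdeg ends c (ends e).1 + c e / Cdeg ends c (ends e).2
      ≤ c e / Cdeg ends c v + c e / m := by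
  have hle : ∀ u, c e / Cdeg ends c u ≤ c e / m := fun u =>
    div_le_div_of_nonneg_left hce hm (hlb u)
  simp only [deltaV, mem_filter, mem_univ, true_and] at he
  rcases he with rfl | rfl
  · exact add_le_add_right (hle _) _
  · rw [add_comm]; exact add_le_add_right (hle _) _

theorem sum_insideE_xLP_le [DecidableEq E] (hnoloop : ∀ e, (ends e).1 ≠ (ends e).2)
    (hc : ∀ e, 0 ≤ c e) {ℓ : ℝ} (hℓ : 0 < ℓ) {γ : ℕ} (hγ : 0 < γ)
    (hpos : ∀ v, 0 < Cdeg ends c v) (hub : ∀ v, Cdeg ends c v ≤ ℓ) {S : Finset V}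
    (hS : 2 ≤ S.card) (hcut : (1 - 1 / (γ : ℝ)) * ℓ ≤ ∑ e ∈ crossE ends S, c e) :
    ∑ e ∈ insideE ends S, xLP ends c γ e ≤ (S.card : ℝ) - 1 := by
  rw [sum_xLP_eq ends c hnoloop γ S _ fun e he => by simpa [insideE] using he]
  have hk := natCast_sub_one_div_nonneg γ
  set k := ((γ : ℝ) - 1) / γ
  calc k * ∑ v ∈ S, (∑ e ∈ insideE ends S ∩ deltaV ends v, c e) / Cdeg ends c v
      ≤ k * ∑ v ∈ S, (1 - (∑ e ∈ crossE ends S ∩ deltaV ends v, c e) / ℓ) := by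
        gcongr with v hv
        exact sum_insideE_div_Cdeg_le ends c hc hv (hpos v) (hub v)
    _ = k * (S.card - (∑ e ∈ crossE ends S, c e) / ℓ) := by
        rw [sum_sub_distrib, ← sum_div, sum_sum_crossE_inter_deltaV, sum_const, nsmul_one]
    _ ≤ k * (S.card - (1 - 1 / γ)) := by
        gcongr
        rwa [le_div_iff₀ hℓ]
    _ ≤ (S.card : ℝ) - 1 := sub_one_div_mul_sub_le (by positivity) (by exact_mod_cast hS)

theorem sum_deltaV_xLP_le (hc : ∀ e, 0 ≤ c e) (γ : ℕ) {m : ℝ} (hm : 0 < m)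
    (hlb : ∀ u, m ≤ Cdeg ends c u) (v : V) :
    ∑ e ∈ deltaV ends v, xLP ends c γ e ≤ ((γ : ℝ) - 1) / γ * (1 + Cdeg ends c v / m) := by
  have hk := natCast_sub_one_div_nonneg γ
  set k := ((γ : ℝ) - 1) / γ
  calc ∑ e ∈ deltaV ends v, xLP ends c γ e
      ≤ ∑ e ∈ deltaV ends v, k * (c e / Cdeg ends c v + c e / m) :=
        sum_le_sum fun e he => mul_le_mul_of_nonneg_left
          (add_div_Cdeg_le_of_mem_deltaV ends c hm hlb (hc e) he) hk
    _ = k * (1 + Cdeg ends c v / m) := by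
        rw [← mul_sum, sum_add_distrib, sum_deltaV_div_Cdeg ends c (hm.trans_le (hlb v)).ne',
          ← sum_div]
        rfl

end Multigraph

/-- Feasibility of the degree-bounded spanning tree LP with degree bound `B = 2`:
in a capacitated multigraph on `γ` vertices with `(1−1/γ²)ℓ ≤ C(v) ≤ ℓ` and every cut
of capacity at least `(1−1/γ)ℓ`, the values `x_e` satisfy `∑ x_e = γ−1`, the subtour
constraints `∑_{e∈E(S)} x_e ≤ |S|−1` for all proper nonempty `S`, and the degree
constraints `∑_{e∈δ(v)} x_e ≤ 2`. -/
theorem stmt_11 {V E : Type*} [Fintype V] [Fintype E] [DecidableEq V]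
    (ends : E → V × V) (c : E → ℝ) (ℓ : ℝ) (hℓ : 0 < ℓ)
    (hγ : 2 ≤ Fintype.card V)
    (hnoloop : ∀ e, (ends e).1 ≠ (ends e).2)
    (hc : ∀ e, 0 ≤ c e)
    (hClb : ∀ v, (1 - 1 / (Fintype.card V : ℝ) ^ 2) * ℓ ≤ Cdeg ends c v)
    (hCub : ∀ v, Cdeg ends c v ≤ ℓ)
    (hcut : ∀ S : Finset V, S.Nonempty → S ≠ univ →
      (1 - 1 / (Fintype.card V : ℝ)) * ℓ ≤ ∑ e ∈ crossE ends S, c e) :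
    (∑ e, xLP ends c (Fintype.card V) e = (Fintype.card V : ℝ) - 1) ∧
    (∀ S : Finset V, S.Nonempty → S ≠ univ →
      ∑ e ∈ insideE ends S, xLP ends c (Fintype.card V) e ≤ (S.card : ℝ) - 1) ∧
    (∀ v, ∑ e ∈ deltaV ends v, xLP ends c (Fintype.card V) e ≤ 2) := by
  classical
  have hγ' : (2 : ℝ) ≤ Fintype.card V := by exact_mod_cast hγ
  have hm : 0 < (1 - 1 / (Fintype.card V : ℝ) ^ 2) * ℓ := by
    have : 1 / (Fintype.card V : ℝ) ^ 2 < 1 := by rw [div_lt_one (by positivity)]; nlinarith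
    exact mul_pos (sub_pos.mpr this) hℓ
  have hpos : ∀ v, 0 < Cdeg ends c v := fun v => hm.trans_le (hClb v)
  refine ⟨?_, fun S hne hS => ?_, fun v => ?_⟩
  · rw [sum_xLP_eq ends c hnoloop _ univ univ (by simp)]
    simp only [univ_inter, sum_div, sum_deltaV_div_Cdeg ends c (hpos _).ne', sum_const,
      card_univ, nsmul_one]
    field_simp
  · obtain ⟨a, rfl⟩ | hS2 : (∃ a, S = {a}) ∨ 2 ≤ S.card := by
      rw [← card_eq_one]; have := hne.card_pos; omega
    · simp [insideE_singleton_eq_empty ends hnoloop]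
    · exact sum_insideE_xLP_le ends c hnoloop hc hℓ (by omega) hpos hCub hS2 (hcut S hne hS)
  · have hk := natCast_sub_one_div_nonneg (Fintype.card V)
    calc ∑ e ∈ deltaV ends v, xLP ends c (Fintype.card V) e
        ≤ ((Fintype.card V : ℝ) - 1) / Fintype.card V * (1 + Cdeg ends c v / _) :=
          sum_deltaV_xLP_le ends c hc _ hm hClb v
      _ ≤ ((Fintype.card V : ℝ) - 1) / Fintype.card V * (1 + ℓ / _) := by
          gcongr
          exact hCub v
      _ ≤ 2 := sub_one_div_mul_one_add_div_le_two hγ' hℓ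
end

section
/- Let H̃' be a multigraph on γ vertices in which every vertex has degree exactly ℓ and every pair of vertices is connected by ℓ pairwise edge-disjoint paths. Call a pair (u,v) of vertices 'bad' if fewer than ℓ/γ³ parallel edges connect them. Then: (a) every vertex participates in at most γ bad pairs, hence in the graph Z obtained by keeping only non-bad pairs (with capacity equal to edge multiplicity), every vertex v satisfies C(v) ≥ ℓ·(1 − 1/γ²); and (b) every pair of vertices of Z can route at least (1 − 1/γ)·ℓ flow units in Z respecting capacities. -/
open Finset

attribute [local instance] Classical.propDecidable

/-- Multiplicity of the pair `{u,v}` in the multigraph. -/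
noncomputable def multE {V E : Type*} [Fintype E] [DecidableEq V]
    (ends : E → Sym2 V) (u v : V) : ℕ :=
  (univ.filter fun e => ends e = s(u, v)).card

/-- Degree of `v` in the multigraph. -/
noncomputable def degE {V E : Type*} [Fintype E] [DecidableEq V]
    (ends : E → Sym2 V) (v : V) : ℕ :=
  (univ.filter fun e => v ∈ ends e).card

/-- The pair `(u,v)` is bad: fewer than `ℓ/γ³` parallel edges connect `u` and `v`. -/
def BadPair {V E : Type*} [Fintype E] [DecidableEq V] (ends : E → Sym2 V)
    (ℓ γ : ℕ) (u v : V) : Prop :=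
  (multE ends u v : ℝ) < (ℓ : ℝ) / (γ : ℝ) ^ 3

/-- Capacity of `v` in the graph `Z` keeping only non-bad pairs. -/
noncomputable def CZ {V E : Type*} [Fintype V] [Fintype E] [DecidableEq V]
    (ends : E → Sym2 V) (ℓ γ : ℕ) (v : V) : ℝ :=
  ∑ u ∈ univ.erase v, if ¬ BadPair ends ℓ γ v u then (multE ends v u : ℝ) else 0

/-- Capacity of the cut `(S, Sᶜ)` in `Z`. -/
noncomputable def cutZ {V E : Type*} [Fintype V] [Fintype E] [DecidableEq V]
    (ends : E → Sym2 V) (ℓ γ : ℕ) (S : Finset V) : ℝ :=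
  ∑ q ∈ S ×ˢ Sᶜ, if ¬ BadPair ends ℓ γ q.1 q.2 then (multE ends q.1 q.2 : ℝ) else 0

/-- Number of multigraph edges with exactly one endpoint in `S`. -/
noncomputable def cutH {V E : Type*} [Fintype V] [Fintype E] [DecidableEq V]
    (ends : E → Sym2 V) (S : Finset V) : ℕ :=
  (univ.filter fun e => ∃ u v, ends e = s(u, v) ∧ u ∈ S ∧ v ∉ S).card

/-!
Replacing the multiplicity of a bad pair by `0` costs less than `ℓ/γ³`. A vertex lies in fewer
than `γ` pairs and a cut separates fewer than `γ²` pairs, so the capacity of a vertex drops from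
its degree `ℓ` by less than `ℓ/γ²`, and that of a cut from at least `ℓ` by less than `ℓ/γ`.
-/

section Multigraph

variable {V E : Type*} [Fintype E] [DecidableEq V] (ends : E → Sym2 V)

lemma sum_multE_sub_le_sum_good {ι : Type*} (ℓ γ : ℕ) (s : Finset ι) (a b : ι → V) :
    ∑ i ∈ s, (multE ends (a i) (b i) : ℝ) - s.card * ((ℓ : ℝ) / (γ : ℝ) ^ 3) ≤
      ∑ i ∈ s, if ¬ BadPair ends ℓ γ (a i) (b i) then (multE ends (a i) (b i) : ℝ) else 0 := by
  rw [← nsmul_eq_mul, ← sum_const, ← sum_sub_distrib]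
  refine sum_le_sum fun i _ => ?_
  by_cases hbad : BadPair ends ℓ γ (a i) (b i)
  · rw [if_neg (not_not_intro hbad)]
    exact sub_nonpos.mpr hbad.le
  · rw [if_pos hbad]
    linarith [show (0 : ℝ) ≤ ℓ / γ ^ 3 by positivity]

variable [Fintype V]

lemma sum_multE_erase_eq_degE (hnoloop : ∀ e, ¬ (ends e).IsDiag) (v : V) :
    ∑ u ∈ univ.erase v, multE ends v u = degE ends v := by
  unfold multE degE
  rw [← card_biUnion]
  · congr 1
    ext e
    simp only [mem_biUnion, mem_filter, mem_univ, true_and, mem_erase]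
    constructor
    · rintro ⟨u, -, he⟩
      exact he ▸ Sym2.mem_mk_left v u
    · intro hv
      obtain ⟨u, hu⟩ := Sym2.mem_iff_exists.mp hv
      refine ⟨u, ⟨fun huv => hnoloop e ?_, trivial⟩, hu⟩
      rw [hu, huv]
      exact Sym2.mk_isDiag_iff.mpr rfl
  · intro a _ b hb hab
    refine disjoint_left.mpr fun e hea heb => ?_
    simp only [mem_filter] at hea heb
    rcases Sym2.eq_iff.mp (hea.2 ▸ heb.2) with ⟨-, h⟩ | ⟨h, -⟩
    · exact hab h
    · exact (mem_erase.mp hb).1 h.symm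

lemma sum_multE_product_compl_eq_cutH (S : Finset V) :
    ∑ q ∈ S ×ˢ Sᶜ, multE ends q.1 q.2 = cutH ends S := by
  unfold multE cutH
  rw [← card_biUnion]
  · congr 1
    ext e
    simp only [mem_biUnion, mem_filter, mem_univ, true_and, mem_product, mem_compl]
    constructor
    · rintro ⟨q, ⟨hq1, hq2⟩, he⟩
      exact ⟨q.1, q.2, he, hq1, hq2⟩
    · rintro ⟨u, w, he, hu, hw⟩
      exact ⟨(u, w), ⟨hu, hw⟩, he⟩
  · intro a ha b hb hab
    rw [mem_coe, mem_product] at ha hb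
    refine disjoint_left.mpr fun e hea heb => ?_
    simp only [mem_filter] at hea heb
    rcases Sym2.eq_iff.mp (hea.2 ▸ heb.2) with ⟨h1, h2⟩ | ⟨h1, -⟩
    · exact hab (Prod.ext h1 h2)
    · exact mem_compl.mp hb.2 (h1 ▸ ha.1)

lemma degE_sub_le_CZ (hnoloop : ∀ e, ¬ (ends e).IsDiag) (ℓ γ : ℕ) (v : V) :
    (degE ends v : ℝ) - Fintype.card V * ((ℓ : ℝ) / (γ : ℝ) ^ 3) ≤ CZ ends ℓ γ v := by
  have hcard : (((univ : Finset V).erase v).card : ℝ) ≤ Fintype.card V := by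
    exact_mod_cast card_erase_le.trans (card_univ (α := V)).le
  calc (degE ends v : ℝ) - Fintype.card V * ((ℓ : ℝ) / (γ : ℝ) ^ 3)
      ≤ ∑ u ∈ univ.erase v, (multE ends v u : ℝ) -
          ((univ : Finset V).erase v).card * ((ℓ : ℝ) / (γ : ℝ) ^ 3) := by
        rw [← Nat.cast_sum, sum_multE_erase_eq_degE ends hnoloop]
        gcongr
    _ ≤ CZ ends ℓ γ v := sum_multE_sub_le_sum_good ends ℓ γ _ (fun _ => v) id

lemma cutH_sub_le_cutZ (ℓ γ : ℕ) (S : Finset V) :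
    (cutH ends S : ℝ) - (Fintype.card V : ℝ) ^ 2 * ((ℓ : ℝ) / (γ : ℝ) ^ 3) ≤ cutZ ends ℓ γ S := by
  have hcard : ((S ×ˢ Sᶜ).card : ℝ) ≤ (Fintype.card V : ℝ) ^ 2 := by
    rw [card_product, sq]
    exact_mod_cast Nat.mul_le_mul (card_le_univ S) (card_le_univ Sᶜ)
  calc (cutH ends S : ℝ) - (Fintype.card V : ℝ) ^ 2 * ((ℓ : ℝ) / (γ : ℝ) ^ 3)
      ≤ ∑ q ∈ S ×ˢ Sᶜ, (multE ends q.1 q.2 : ℝ) -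
          (S ×ˢ Sᶜ).card * ((ℓ : ℝ) / (γ : ℝ) ^ 3) := by
        rw [← Nat.cast_sum, sum_multE_product_compl_eq_cutH]
        gcongr
    _ ≤ cutZ ends ℓ γ S := sum_multE_sub_le_sum_good ends ℓ γ _ Prod.fst Prod.snd

end Multigraph

lemma pow_mul_div_pow_add {K : Type*} [Field K] (a x : K) (k : ℕ) {m : ℕ} (hm : m ≠ 0) :
    x ^ k * (a / x ^ (k + m)) = a / x ^ m := by
  rcases eq_or_ne x 0 with rfl | hx
  · simp [hm]
  · rw [pow_add]
    field_simp

theorem stmt_13_general {V E : Type*} [Fintype V] [Fintype E] [DecidableEq V]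
    (ends : E → Sym2 V) (ℓ : ℕ)
    (hnoloop : ∀ e, ¬ (ends e).IsDiag)
    (hdeg : ∀ v, degE ends v = ℓ)
    (hconn : ∀ S : Finset V, S.Nonempty → S ≠ univ → ℓ ≤ cutH ends S) :
    (∀ v, (ℓ : ℝ) * (1 - 1 / (Fintype.card V : ℝ) ^ 2) ≤
      CZ ends ℓ (Fintype.card V) v) ∧
    (∀ S : Finset V, S.Nonempty → S ≠ univ →
      (1 - 1 / (Fintype.card V : ℝ)) * ℓ ≤ cutZ ends ℓ (Fintype.card V) S) := by
  set n : ℝ := ((Fintype.card V : ℕ) : ℝ)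
  refine ⟨fun v => ?_, fun S hS hSu => ?_⟩
  · calc (ℓ : ℝ) * (1 - 1 / n ^ 2) = degE ends v - n ^ 1 * (ℓ / n ^ (1 + 2)) := by
          rw [hdeg, pow_mul_div_pow_add _ _ _ two_ne_zero]
          ring
      _ ≤ CZ ends ℓ (Fintype.card V) v := by
          simpa using degE_sub_le_CZ ends hnoloop ℓ (Fintype.card V) v
  · calc (1 - 1 / n) * ℓ = ℓ - n ^ 2 * (ℓ / n ^ (2 + 1)) := by
          rw [pow_mul_div_pow_add _ _ _ one_ne_zero]
          ring
      _ ≤ cutH ends S - n ^ 2 * (ℓ / n ^ (2 + 1)) := by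
          gcongr
          exact_mod_cast hconn S hS hSu
      _ ≤ cutZ ends ℓ (Fintype.card V) S := cutH_sub_le_cutZ ends ℓ (Fintype.card V) S

/-- Let `H̃'` be a loopless multigraph on `γ ≥ 2` vertices, each of degree exactly `ℓ ≥ γ³`,
in which every cut has at least `ℓ` crossing edges (equivalently, every pair of vertices
is joined by `ℓ` edge-disjoint paths).  Keeping only the non-bad pairs (those joined by at
least `ℓ/γ³` parallel edges), with capacities equal to the multiplicities:
(a) every vertex `v` satisfies `C(v) ≥ ℓ(1 − 1/γ²)`; and
(b) every cut of `Z` has capacity at least `(1 − 1/γ)ℓ` (so every pair of vertices can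
route `(1−1/γ)ℓ` flow units in `Z`). -/
theorem stmt_13 {V E : Type*} [Fintype V] [Fintype E] [DecidableEq V]
    (ends : E → Sym2 V) (ℓ : ℕ)
    (hγ2 : 2 ≤ Fintype.card V) (hℓ : (Fintype.card V) ^ 3 ≤ ℓ)
    (hnoloop : ∀ e, ¬ (ends e).IsDiag)
    (hdeg : ∀ v, degE ends v = ℓ)
    (hconn : ∀ S : Finset V, S.Nonempty → S ≠ univ → ℓ ≤ cutH ends S) :
    (∀ v, (ℓ : ℝ) * (1 - 1 / (Fintype.card V : ℝ) ^ 2) ≤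
      CZ ends ℓ (Fintype.card V) v) ∧
    (∀ S : Finset V, S.Nonempty → S ≠ univ →
      (1 - 1 / (Fintype.card V : ℝ)) * ℓ ≤ cutZ ends ℓ (Fintype.card V) S) :=
  stmt_13_general ends ℓ hnoloop hdeg hconn
end

section
/- Let X be a graph produced by the cut-matching game of Khandekar–Rao–Vazirani on N vertices after γ_KRV(N) = O(log²N) rounds, so that X is a 1/2-expander with maximum degree at most γ_KRV(N). Suppose the vertices of X are partitioned into N/2 demand pairs. Then there is a routing of Ω(N/(log N · γ_KRV(N)²)) = Ω(N/log⁵N) of the demand pairs along pairwise vertex-disjoint paths in X. -/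
/-!
Route the pairs greedily. Let `Z` be the set of vertices used by the paths routed so far.
Repeatedly deleting from `Zᶜ` a set that expands badly inside the current set does not increase
the potential `4·e(A, Aᶜ) - #A`, so it stops at a set `A` of size at least `N - (4D + 1)·#Z` in
which every set of at most half of `A` has edge expansion `1/8` inside `A`. In such a set the
balls of radius `8D·log₂ N` around any vertex grow by a factor `1 + 1/(8D)` until they cover
half of `A`, so any two vertices of `A` are joined inside `A` by a path with `O(D log N)`
vertices. As long as `2(4D + 1)·#Z < N`, the set `A` contains a whole demand pair; since each
routed path uses `O(D log N)` vertices, `Ω(N / (D² log N))` pairs get routed.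
-/

open Finset

theorem Nat.lt_two_mul_of_growth {b : ℕ → ℕ} {a m k : ℕ} (hm : 1 ≤ m) (hb : Monotone b)
    (hb0 : 1 ≤ b 0) (ha : a ≤ 2 ^ k)
    (hgrowth : ∀ r, 2 * b r ≤ a → (m + 1) * b r ≤ m * b (r + 1)) :
    a < 2 * b (m * k) := by
  by_contra! h
  have hpow : ∀ r ≤ m * k, (m + 1) ^ r ≤ m ^ r * b r := by
    intro r
    induction r with
    | zero => simpa using hb0
    | succ r ih =>
      intro hr
      have hhalf : 2 * b r ≤ a := (Nat.mul_le_mul_left 2 (hb (by omega))).trans h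
      calc (m + 1) ^ (r + 1) = (m + 1) ^ r * (m + 1) := pow_succ _ _
        _ ≤ m ^ r * b r * (m + 1) := Nat.mul_le_mul_right _ (ih (by omega))
        _ = m ^ r * ((m + 1) * b r) := by ring
        _ ≤ m ^ r * (m * b (r + 1)) := Nat.mul_le_mul_left _ (hgrowth r hhalf)
        _ = m ^ (r + 1) * b (r + 1) := by ring
  -- Bernoulli: `(1 + 1/m) ^ m ≥ 2`.
  have hbernoulli : 2 * m ^ m ≤ (m + 1) ^ m := by
    have h := pow_add_mul_le_add_pow (a := m) (b := 1) (Nat.zero_le _) (Nat.zero_le _) m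
    obtain ⟨m', rfl⟩ : ∃ m', m = m' + 1 := ⟨m - 1, by omega⟩
    simp only [Nat.cast_id, add_tsub_cancel_right, mul_one] at h
    calc 2 * (m' + 1) ^ (m' + 1) = (m' + 1) ^ (m' + 1) + (m' + 1) * (m' + 1) ^ m' := by ring
      _ ≤ _ := h
  have hkey : 2 ^ k * m ^ (m * k) ≤ m ^ (m * k) * b (m * k) :=
    calc 2 ^ k * m ^ (m * k) = (2 * m ^ m) ^ k := by rw [mul_pow, pow_mul]
      _ ≤ ((m + 1) ^ m) ^ k := Nat.pow_le_pow_left hbernoulli k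
      _ = (m + 1) ^ (m * k) := (pow_mul _ _ _).symm
      _ ≤ m ^ (m * k) * b (m * k) := hpow _ le_rfl
  have hbk : 2 ^ k ≤ b (m * k) :=
    Nat.le_of_mul_le_mul_left (by rwa [mul_comm] at hkey) (by positivity)
  have : 0 < 2 ^ k := by positivity
  omega

theorem Finset.exists_mem_and_apply_mem {V : Type*} [Fintype V] [DecidableEq V] {σ : V → V}
    (hσ : σ.Injective) {A : Finset V} (hA : 2 * #Aᶜ < Fintype.card V) :
    ∃ v ∈ A, σ v ∈ A := by
  by_contra! h
  have hcover : (univ : Finset V) ⊆ Aᶜ ∪ ({v | σ v ∉ A} : Finset V) := fun v _ => by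
    by_cases hv : v ∈ A <;> simp [hv, h]
  have hpre : #({v | σ v ∉ A} : Finset V) ≤ #Aᶜ :=
    card_le_card_of_injOn σ (fun v hv => by simpa using hv) hσ.injOn
  have := (card_le_card hcover).trans (card_union_le _ _)
  rw [card_univ] at this
  omega

namespace SimpleGraph

section

variable {V : Type*} {X : SimpleGraph V}

open Classical in
noncomputable def ballIn (X : SimpleGraph V) (A : Finset V) (v : V) (r : ℕ) : Finset V :=
  {w ∈ A | ∃ p : X.Walk v w, p.length ≤ r ∧ ∀ x ∈ p.support, x ∈ A}

variable {A : Finset V} {u v w : V} {r : ℕ}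

theorem mem_ballIn : w ∈ X.ballIn A v r ↔
    w ∈ A ∧ ∃ p : X.Walk v w, p.length ≤ r ∧ ∀ x ∈ p.support, x ∈ A := by
  classical
  rw [ballIn, mem_filter]

theorem ballIn_subset : X.ballIn A v r ⊆ A := fun _ hw => (mem_ballIn.1 hw).1

theorem ballIn_mono : Monotone (X.ballIn A v) := fun _ _ hrs _ hw => by
  obtain ⟨hw, p, hp, hpA⟩ := mem_ballIn.1 hw
  exact mem_ballIn.2 ⟨hw, p, hp.trans hrs, hpA⟩

theorem self_mem_ballIn (hv : v ∈ A) : v ∈ X.ballIn A v r :=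
  mem_ballIn.2 ⟨hv, .nil, by simp, by simpa⟩

theorem mem_ballIn_succ (hu : u ∈ X.ballIn A v r) (hw : w ∈ A) (huw : X.Adj u w) :
    w ∈ X.ballIn A v (r + 1) := by
  obtain ⟨-, p, hp, hpA⟩ := mem_ballIn.1 hu
  refine mem_ballIn.2 ⟨hw, p.concat huw, by simpa using hp, fun x hx => ?_⟩
  rw [Walk.support_concat, List.mem_append, List.mem_singleton] at hx
  exact hx.elim (hpA x) (· ▸ hw)

theorem exists_pairwise_disjoint_paths [DecidableEq V] {σ : V → V} {L t : ℕ}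
    (h : ∀ U : Finset V, #U + (L + 1) ≤ t * (L + 1) →
      ∃ v, ∃ q : X.Walk v (σ v),
        q.IsPath ∧ q.length ≤ L ∧ ∀ x ∈ q.support, x ∉ U) :
    ∃ ws : List (Σ v, X.Walk v (σ v)), ws.length = t ∧ (∀ a ∈ ws, a.2.IsPath) ∧
      ws.Pairwise fun a b => a.2.support.Disjoint b.2.support := by
  suffices ∀ s ≤ t, ∃ ws : List (Σ v, X.Walk v (σ v)),
      ws.length = s ∧ (∀ a ∈ ws, a.2.IsPath) ∧
      (ws.Pairwise fun a b => a.2.support.Disjoint b.2.support) ∧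
      ∃ U : Finset V, #U ≤ s * (L + 1) ∧ ∀ a ∈ ws, ∀ x ∈ a.2.support, x ∈ U by
    obtain ⟨ws, hlen, hpath, hdisj, -⟩ := this t le_rfl
    exact ⟨ws, hlen, hpath, hdisj⟩
  intro s hs
  induction s with
  | zero => exact ⟨[], rfl, by simp, .nil, ∅, by simp, by simp⟩
  | succ s ih =>
    obtain ⟨ws, hlen, hpath, hdisj, U, hU, hwsU⟩ := ih (by omega)
    obtain ⟨v, q, hq, hqL, hqU⟩ := h U <|
      calc #U + (L + 1) ≤ (s + 1) * (L + 1) := by linarith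
        _ ≤ t * (L + 1) := Nat.mul_le_mul_right _ hs
    refine ⟨⟨v, q⟩ :: ws, by simp [hlen], ?_, ?_, U ∪ q.support.toFinset, ?_, ?_⟩
    · simpa [List.forall_mem_cons] using ⟨hq, hpath⟩
    · exact List.pairwise_cons.2
        ⟨fun a ha _ hxq hxa => hqU _ hxq (hwsU a ha _ hxa), hdisj⟩
    · calc #(U ∪ q.support.toFinset) ≤ #U + q.support.length :=
            (card_union_le _ _).trans (Nat.add_le_add_left (List.toFinset_card_le _) _)
        _ ≤ (s + 1) * (L + 1) := by rw [Walk.length_support]; linarith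
    · rintro a (_ | ⟨_, ha⟩) x hx
      · exact mem_union_right _ (List.mem_toFinset.2 hx)
      · exact mem_union_left _ (hwsU a ha x hx)

end

variable {V : Type*} {X : SimpleGraph V} [DecidableRel X.Adj] {A : Finset V} {u v w : V} {r : ℕ}

theorem card_interedges_comm (s t : Finset V) :
    #(X.interedges s t) = #(X.interedges t s) :=
  have := X.symm
  Rel.card_interedges_comm s t

variable [DecidableEq V]

theorem card_interedges_union_left {s₁ s₂ : Finset V} (h : Disjoint s₁ s₂) (t : Finset V) :
    #(X.interedges (s₁ ∪ s₂) t) = #(X.interedges s₁ t) + #(X.interedges s₂ t) := by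
  rw [← card_union_of_disjoint (X.interedges_disjoint_left h t)]
  congr 1
  ext
  simp only [mem_union, mem_interedges_iff]
  tauto

theorem card_interedges_union_right (s : Finset V) {t₁ t₂ : Finset V} (h : Disjoint t₁ t₂) :
    #(X.interedges s (t₁ ∪ t₂)) = #(X.interedges s t₁) + #(X.interedges s t₂) := by
  simp only [card_interedges_comm s, card_interedges_union_left h]

/-- The subgraph induced on `A` has edge expansion at least `1 / K`. -/
def IsExpanderOn (X : SimpleGraph V) [DecidableRel X.Adj] (A : Finset V) (K : ℕ) : Prop :=
  ∀ S ⊆ A, 2 * #S ≤ #A → #S ≤ K * #(X.interedges S (A \ S))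

variable [Fintype V]

theorem card_interedges_le_mul_card {D : ℕ} {s : Finset V} (hD : ∀ v ∈ s, X.degree v ≤ D)
    (t : Finset V) : #(X.interedges s t) ≤ D * #s := by
  refine card_le_mul_card_image_of_maps_to (f := Prod.fst)
    (fun e he => (X.mem_interedges_iff.1 he).1) D fun a ha => ?_
  refine (card_le_card_of_injOn Prod.snd (fun e he => ?_) fun e he e' he' h => ?_).trans
    ((X.card_neighborFinset_eq_degree a).trans_le (hD a ha))
  · simp only [coe_filter, Set.mem_ofPred_eq, mem_interedges_iff] at he
    simpa [← he.2] using he.1.2.2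
  · simp only [coe_filter, Set.mem_ofPred_eq] at he he'
    exact Prod.ext (he.2.trans he'.2.symm) h

theorem card_outF (S : Finset V) : #(outF X S) = #(X.interedges S Sᶜ) := by
  symm
  refine card_bij (fun e _ => s(e.1, e.2)) (fun e he => ?_) (fun e he e' he' h => ?_) fun e he => ?_
  · rw [mem_interedges_iff, mem_compl] at he
    simp only [outF, mem_filter, mem_edgeFinset, mem_edgeSet]
    exact ⟨he.2.2, e.1, e.2, rfl, he.1, he.2.1⟩
  · rw [mem_interedges_iff, mem_compl] at he he'
    rcases Sym2.eq_iff.1 h with ⟨h₁, h₂⟩ | ⟨-, h₂⟩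
    · exact Prod.ext h₁ h₂
    · exact absurd (h₂ ▸ he'.1) he.2.1
  · obtain ⟨he, u, v, rfl, hu, hv⟩ := mem_filter.1 he
    exact ⟨(u, v), X.mk_mem_interedges_iff.2
      ⟨hu, mem_compl.2 hv, X.mem_edgeSet.1 (X.mem_edgeFinset.1 he)⟩, rfl⟩

theorem isExpanderOn_univ_of_card_outF {K : ℕ}
    (hX : ∀ S : Finset V, 2 * #S ≤ Fintype.card V → #S ≤ K * #(outF X S)) :
    X.IsExpanderOn univ K := fun S _ hS => by
  simpa [card_outF, compl_eq_univ_sdiff] using hX S (by simpa using hS)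

/-- Removing a set `S` that violates expansion inside `A` does not increase the potential
`2k·e(A, Aᶜ) - #A`. -/
theorem potential_sdiff_le {k : ℕ} (hX : X.IsExpanderOn univ k) {S : Finset V} (hSA : S ⊆ A)
    (hS : 2 * #S ≤ #A) (hbad : 4 * k * #(X.interedges S (A \ S)) < #S) :
    2 * k * #(X.interedges (A \ S) (A \ S)ᶜ) + #A ≤
      2 * k * #(X.interedges A Aᶜ) + #(A \ S) := by
  have hSc : A \ S ∪ Aᶜ = univ \ S := by
    ext x; have := @hSA x; simp only [mem_union, mem_sdiff, mem_compl, mem_univ]; tauto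
  have hASc : Aᶜ ∪ S = (A \ S)ᶜ := by
    ext x; have := @hSA x; simp only [mem_union, mem_sdiff, mem_compl]; tauto
  have hdisj : Disjoint Aᶜ S := Finset.disjoint_left.2 fun x hx hxS => mem_compl.1 hx (hSA hxS)
  have hexp := hX S (subset_univ S) (hS.trans (card_le_univ A))
  have hA := card_interedges_union_left (X := X) (disjoint_sdiff : Disjoint S (A \ S)) Aᶜ
  rw [union_sdiff_of_subset hSA] at hA
  rw [← hSc, card_interedges_union_right S (disjoint_compl_right.mono_left sdiff_subset)] at hexp
  rw [← hASc, card_interedges_union_right _ hdisj, card_interedges_comm (A \ S) S]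
  have hcard := card_sdiff_add_card_eq_card hSA
  nlinarith

theorem exists_subset_isExpanderOn {k : ℕ} (hX : X.IsExpanderOn univ k) (A₀ : Finset V) :
    ∃ A ⊆ A₀, X.IsExpanderOn A (4 * k) ∧
      2 * k * #(X.interedges A Aᶜ) + #A₀ ≤ 2 * k * #(X.interedges A₀ A₀ᶜ) + #A := by
  induction A₀ using Finset.strongInduction with
  | H A₀ ih =>
    by_cases hA₀ : X.IsExpanderOn A₀ (4 * k)
    · exact ⟨A₀, subset_rfl, hA₀, le_rfl⟩
    simp only [IsExpanderOn, not_forall, not_le] at hA₀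
    obtain ⟨S, hSA, hS, hbad⟩ := hA₀
    obtain ⟨A, hA, hAexp, hpot⟩ :=
      ih (A₀ \ S) (sdiff_ssubset hSA (card_pos.1 (Nat.zero_lt_of_lt hbad)))
    have hstep := potential_sdiff_le hX hSA hS hbad
    exact ⟨A, hA.trans sdiff_subset, hAexp, by omega⟩

theorem exists_isExpanderOn_subset_compl {k D : ℕ} (hX : X.IsExpanderOn univ k)
    (hD : ∀ v, X.degree v ≤ D) (Z : Finset V) :
    ∃ A ⊆ Zᶜ, X.IsExpanderOn A (4 * k) ∧ #Zᶜ ≤ #A + 2 * k * D * #Z := by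
  obtain ⟨A, hAZ, hA, hpot⟩ := exists_subset_isExpanderOn hX Zᶜ
  have hcut : #(X.interedges Zᶜ Zᶜᶜ) ≤ D * #Z := by
    rw [compl_compl, card_interedges_comm]
    exact card_interedges_le_mul_card (fun v _ => hD v) _
  exact ⟨A, hAZ, hA, by nlinarith⟩

theorem card_ballIn_succ_ge {K D : ℕ} (hA : X.IsExpanderOn A K) (hD : ∀ v, X.degree v ≤ D)
    (hhalf : 2 * #(X.ballIn A v r) ≤ #A) :
    (K * D + 1) * #(X.ballIn A v r) ≤ K * D * #(X.ballIn A v (r + 1)) := by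
  set B := X.ballIn A v r
  set B' := X.ballIn A v (r + 1)
  have hexp : #B ≤ K * #(X.interedges B (A \ B)) := hA B ballIn_subset hhalf
  have hlayer : X.interedges B (A \ B) ⊆ X.interedges B (B' \ B) := fun e he => by
    rw [mem_interedges_iff, mem_sdiff] at he ⊢
    exact ⟨he.1, ⟨mem_ballIn_succ he.1 he.2.1.1 he.2.2, he.2.1.2⟩, he.2.2⟩
  have hdeg : #(X.interedges B (B' \ B)) ≤ D * #(B' \ B) := by
    rw [card_interedges_comm]
    exact card_interedges_le_mul_card (fun v _ => hD v) _
  have hB' : #(B' \ B) + #B = #B' := card_sdiff_add_card_eq_card (ballIn_mono r.le_succ)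
  have := Nat.mul_le_mul_left K ((card_le_card hlayer).trans hdeg)
  rw [← hB']
  linarith

theorem card_lt_two_mul_card_ballIn {K D k : ℕ} (hA : X.IsExpanderOn A K)
    (hD : ∀ v, X.degree v ≤ D) (hKD : 1 ≤ K * D) (hAk : #A ≤ 2 ^ k) (hv : v ∈ A) :
    #A < 2 * #(X.ballIn A v (K * D * k)) :=
  Nat.lt_two_mul_of_growth hKD (fun _ _ h => card_le_card (ballIn_mono h))
    (card_pos.2 ⟨v, self_mem_ballIn hv⟩) hAk fun _ => card_ballIn_succ_ge hA hD

theorem exists_isPath_of_isExpanderOn {K D k : ℕ} (hA : X.IsExpanderOn A K)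
    (hD : ∀ v, X.degree v ≤ D) (hKD : 1 ≤ K * D) (hAk : #A ≤ 2 ^ k) (hu : u ∈ A)
    (hw : w ∈ A) :
    ∃ q : X.Walk u w,
      q.IsPath ∧ q.length ≤ 2 * (K * D * k) ∧ ∀ x ∈ q.support, x ∈ A := by
  set R := K * D * k
  -- two balls, each holding more than half of `A`, must meet
  obtain ⟨z, hz⟩ : (X.ballIn A u R ∩ X.ballIn A w R).Nonempty := by
    rw [← card_pos]
    have := card_union_add_card_inter (X.ballIn A u R) (X.ballIn A w R)
    have : #(X.ballIn A u R ∪ X.ballIn A w R) ≤ #A :=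
      card_le_card (union_subset ballIn_subset ballIn_subset)
    have : #A < 2 * #(X.ballIn A u R) := card_lt_two_mul_card_ballIn hA hD hKD hAk hu
    have : #A < 2 * #(X.ballIn A w R) := card_lt_two_mul_card_ballIn hA hD hKD hAk hw
    omega
  obtain ⟨-, p₁, hp₁, hp₁A⟩ := mem_ballIn.1 (mem_inter.1 hz).1
  obtain ⟨-, p₂, hp₂, hp₂A⟩ := mem_ballIn.1 (mem_inter.1 hz).2
  refine ⟨(p₁.append p₂.reverse).bypass, Walk.bypass_isPath _, ?_, fun x hx => ?_⟩
  · have := (p₁.append p₂.reverse).length_bypass_le_length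
    rw [Walk.length_append, Walk.length_reverse] at this
    omega
  · have := Walk.support_bypass_subset_support _ hx
    rw [Walk.mem_support_append_iff, Walk.support_reverse, List.mem_reverse] at this
    exact this.elim (hp₁A x) (hp₂A x)

theorem exists_pairwise_disjoint_paths_of_isExpanderOn {D k L t : ℕ} {σ : V → V}
    (hX : X.IsExpanderOn univ 2) (hD : ∀ v, X.degree v ≤ D) (hD1 : 1 ≤ D) (hσ : σ.Injective)
    (hk : Fintype.card V ≤ 2 ^ k) (hL : 2 * (8 * D * k) ≤ L)
    (ht : t * (2 * (4 * D + 1) * (L + 1)) < Fintype.card V + 2 * (4 * D + 1) * (L + 1)) :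
    ∃ ws : List (Σ v, X.Walk v (σ v)), ws.length = t ∧ (∀ a ∈ ws, a.2.IsPath) ∧
      ws.Pairwise fun a b => a.2.support.Disjoint b.2.support := by
  refine exists_pairwise_disjoint_paths (L := L) fun U hU => ?_
  obtain ⟨A, hAU, hA, hcard⟩ := exists_isExpanderOn_subset_compl hX hD U
  have hpair : 2 * #Aᶜ < Fintype.card V := by
    have := card_add_card_compl A
    have := card_add_card_compl U
    have := Nat.mul_le_mul_left (2 * (4 * D + 1)) hU
    nlinarith
  obtain ⟨v, hv, hσv⟩ := exists_mem_and_apply_mem hσ hpair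
  obtain ⟨q, hq, hqL, hqA⟩ := exists_isPath_of_isExpanderOn hA hD (by omega)
    ((card_le_univ A).trans hk) hv hσv
  exact ⟨v, q, hq, hqL.trans hL, fun x hx => mem_compl.1 (hAU (hqA x hx))⟩

end SimpleGraph

theorem Nat.log_add_one_le_three_mul_log {n : ℕ} (hn : 2 ≤ n) :
    ((Nat.log 2 n + 1 : ℕ) : ℝ) ≤ 3 * Real.log n := by
  have hlog : (Nat.log 2 n : ℝ) ≤ Real.log n / Real.log 2 := by
    simpa [Real.logb] using Real.natLog_le_logb n 2
  rw [le_div_iff₀ (by positivity)] at hlog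
  have h1 : (1 : ℝ) ≤ Nat.log 2 n := by exact_mod_cast Nat.log_pos one_lt_two hn
  have h2 := Real.log_two_gt_d9
  push_cast
  nlinarith

theorem Nat.exists_le_mul_lt_add (n : ℕ) {Q : ℕ} (hQ : 0 < Q) :
    ∃ t, n ≤ t * Q ∧ t * Q < n + Q :=
  ⟨(n + Q - 1) / Q, by have := Nat.lt_div_mul_add (a := n + Q - 1) hQ; omega,
    by have := Nat.div_mul_le_self (n + Q - 1) Q; omega⟩

theorem div_log_mul_sq_le_of_le_mul {n D t : ℕ} (hn : 2 ≤ n) (hD : 1 ≤ D)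
    (ht : n ≤ t * (2 * (4 * D + 1) * (2 * (8 * D * (Nat.log 2 n + 1)) + 1))) :
    1 / 510 * (n : ℝ) / (Real.log n * D ^ 2) ≤ t := by
  have hk := Nat.log_add_one_le_three_mul_log hn
  set k : ℕ := Nat.log 2 n + 1
  have hk1 : (1 : ℝ) ≤ k := by exact_mod_cast Nat.le_add_left 1 _
  have hD' : (1 : ℝ) ≤ D := by exact_mod_cast hD
  have hcost : ((2 * (4 * D + 1) * (2 * (8 * D * k) + 1) : ℕ) : ℝ) ≤ 170 * D ^ 2 * k := by
    push_cast
    nlinarith [mul_le_mul hD' hk1 zero_le_one (by positivity)]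
  have ht' : (n : ℝ) ≤ t * (170 * D ^ 2 * k) :=
    (Nat.cast_le.2 ht).trans (by push_cast at hcost ⊢; gcongr)
  rw [div_le_iff₀ (by have := Real.log_pos (by exact_mod_cast hn : (1 : ℝ) < n); positivity)]
  nlinarith [sq_nonneg (D : ℝ), (Nat.cast_nonneg t : (0 : ℝ) ≤ t)]

open SimpleGraph in
/-- Routing on the KRV expander: there is a universal constant `c > 0` such that in any
`1/2`-expander `X` on `N` vertices of maximum degree at most `D ≥ 1` whose vertices are
partitioned into `N/2` demand pairs (given by a fixed-point-free involution `σ`), at least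
`c·N/(log N · D²)` of the demand pairs can be routed along pairwise vertex-disjoint
paths. -/
theorem stmt_14 :
    ∃ c : ℝ, 0 < c ∧
      ∀ (V : Type) [Fintype V] [DecidableEq V] (X : SimpleGraph V)
        [DecidableRel X.Adj] (D : ℕ) (σ : V → V),
        (∀ v, σ (σ v) = v) → (∀ v, σ v ≠ v) →
        (∀ v, X.degree v ≤ D) → 1 ≤ D →
        (∀ S : Finset V, 2 * S.card ≤ Fintype.card V →
          S.card ≤ 2 * (outF X S).card) →
        ∃ (r : ℕ) (s : Fin r → V) (p : ∀ i, X.Walk (s i) (σ (s i))),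
          (∀ i, (p i).IsPath) ∧
          (∀ i j, i ≠ j → ∀ v, v ∈ (p i).support → v ∉ (p j).support) ∧
          c * (Fintype.card V : ℝ) / (Real.log (Fintype.card V) * (D : ℝ) ^ 2) ≤ r := by
  refine ⟨1 / 510, by norm_num, fun V _ _ X _ D σ hσ _ hD hD1 hX => ?_⟩
  rcases le_or_gt (Fintype.card V) 1 with hn | hn
  · -- `log (card V) = 0`, so any `r` will do
    refine ⟨0, Fin.elim0, fun i => i.elim0, fun i => i.elim0, fun i => i.elim0, ?_⟩
    interval_cases Fintype.card V <;> simp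
  set n := Fintype.card V
  obtain ⟨t, hnt, htn⟩ := Nat.exists_le_mul_lt_add n
    (Q := 2 * (4 * D + 1) * (2 * (8 * D * (Nat.log 2 n + 1)) + 1)) (by positivity)
  obtain ⟨ws, hlen, hpath, hdisj⟩ :=
    exists_pairwise_disjoint_paths_of_isExpanderOn (k := Nat.log 2 n + 1)
      (isExpanderOn_univ_of_card_outF hX) hD hD1 (Function.Involutive.injective hσ)
      (Nat.lt_pow_succ_log_self one_lt_two n).le le_rfl htn
  refine ⟨ws.length, fun i => (ws.get i).1, fun i => (ws.get i).2,
    fun i => hpath _ (List.get_mem ws i), fun i j hij => ?_, ?_⟩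
  · rcases hij.lt_or_gt with h | h
    · exact fun v hi hj => hdisj.rel_get_of_lt h hi hj
    · exact fun v hi hj => hdisj.rel_get_of_lt h hj hi
  · rw [hlen]
    exact div_log_mul_sq_le_of_le_mul hn hD1 hnt
end

section
/- Let G=(V,E) be an n-vertex graph of maximum degree d that is a 1/2-expander. Then every feasible multicut for any set of demand pairs forming a perfect matching on V has size at least n/4; equivalently, the minimum multicut value is at least n/4, while the fractional multicut obtained by assigning length 1/ℓ to every edge after the greedy removal process has value (|E'| + |E''|/ℓ)·β(n) ≥ n/4 where E' are deleted edges, E'' remaining edges, and β(n) = O(log n) is the multicut flow-cut gap. Consequently |E'| ≥ n/4 − d·n·β(n)/(2ℓ), and with ℓ = 4dβ(n), |E'| ≥ n/8. -/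
/-!
Deleting a multicut `E*` leaves components containing no demand pair; since the demands form a
perfect matching, each component `C` and its image under `σ` are disjoint, so `|C| ≤ n/2`. The
expansion of `G` then gives `|C| ≤ 2 |∂C|`, every edge of `∂C` lies in `E*`, and every edge lies on
at most two such boundaries, whence `n ≤ 4 |E*|`. Applied to `E' ∪ Eint`, where the rounding `Eint`
of the fractional multicut `1/ℓ` on `E''` has at most `β |E''| / ℓ ≤ β d n / (2ℓ)` edges, this gives
`|E'| ≥ n/4 - d n β / (2ℓ)`, which is at least `n/8` for `ℓ = 4 d β`.
-/

open Finset

namespace SimpleGraph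

variable {V : Type*} [Fintype V]

lemma two_mul_card_edgeFinset_le (G : SimpleGraph V) [DecidableRel G.Adj] {d : ℕ}
    (hdeg : ∀ v, G.degree v ≤ d) : 2 * #G.edgeFinset ≤ d * Fintype.card V := by
  rw [← sum_degrees_eq_twice_card_edges, mul_comm]
  exact sum_le_card_nsmul _ _ _ fun v _ ↦ hdeg v

variable [DecidableEq V]

lemma two_mul_card_le_card_of_disjoint_image {σ : V → V} (hσ : σ.Injective) {s : Finset V}
    (h : Disjoint s (s.image σ)) : 2 * #s ≤ Fintype.card V := by
  have := card_le_univ (s ∪ s.image σ)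
  rw [card_union_of_disjoint h, card_image_of_injective s hσ] at this
  omega

lemma sum_card_supp_toFinset (H : SimpleGraph V) [DecidableRel H.Adj] :
    ∑ c : H.ConnectedComponent, #c.supp.toFinset = Fintype.card V := by
  classical
  rw [← card_univ, card_eq_sum_card_fiberwise (f := H.connectedComponentMk) (t := univ)
    fun _ _ ↦ mem_univ _]
  congr! with c
  ext v
  simp [eq_comm]

lemma two_mul_card_supp_le {H : SimpleGraph V} [DecidableRel H.Adj] {σ : V → V}
    (hσ : σ.Injective) (hcut : ∀ v, ¬ H.Reachable v (σ v)) (c : H.ConnectedComponent) :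
    2 * #c.supp.toFinset ≤ Fintype.card V := by
  refine two_mul_card_le_card_of_disjoint_image hσ (Finset.disjoint_left.2 fun v hv hσv ↦ ?_)
  obtain ⟨w, hw, rfl⟩ := mem_image.1 hσv
  simp only [Set.mem_toFinset, ConnectedComponent.mem_supp_iff] at hv hw
  exact hcut w (ConnectedComponent.exact (hw.trans hv.symm))

variable (G : SimpleGraph V) [DecidableRel G.Adj]

lemma exists_mem_of_mem_outF {A : Finset V} {e : Sym2 V} (he : e ∈ outF G A) :
    ∃ u ∈ e, u ∈ A := by
  obtain ⟨-, u, v, rfl, hu, -⟩ := mem_filter.1 he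
  exact ⟨u, Sym2.mem_mk_left u v, hu⟩

lemma outF_supp_toFinset_subset (E : Finset (Sym2 V))
    (c : (G.deleteEdges ↑E).ConnectedComponent) : outF G c.supp.toFinset ⊆ E := by
  intro e he
  obtain ⟨hG, u, v, rfl, hu, hv⟩ := mem_filter.1 he
  by_contra hE
  have hadj : (G.deleteEdges ↑E).Adj u v := (deleteEdges_adj ..).2 ⟨mem_edgeFinset.1 hG, hE⟩
  simp only [Set.mem_toFinset, ConnectedComponent.mem_supp_iff] at hu hv
  exact hv (hu ▸ (ConnectedComponent.eq.2 hadj.reachable).symm)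

lemma card_filter_mem_outF_supp_le_two (H : SimpleGraph V) [DecidableRel H.Adj] (e : Sym2 V) :
    #{c : H.ConnectedComponent | e ∈ outF G c.supp.toFinset} ≤ 2 := by
  classical
  induction e using Sym2.ind with
  | h a b =>
    calc _ ≤ #{H.connectedComponentMk a, H.connectedComponentMk b} := by
          refine card_le_card fun c hc ↦ ?_
          obtain ⟨u, hu, huc⟩ := exists_mem_of_mem_outF G (mem_filter.1 hc).2
          simp only [Set.mem_toFinset, ConnectedComponent.mem_supp_iff] at huc
          rcases Sym2.mem_iff.1 hu with rfl | rfl <;> simp [huc]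
      _ ≤ 2 := card_le_two

lemma sum_card_outF_supp_le (E : Finset (Sym2 V)) :
    ∑ c : (G.deleteEdges ↑E).ConnectedComponent, #(outF G c.supp.toFinset) ≤ 2 * #E := by
  let r (c : (G.deleteEdges ↑E).ConnectedComponent) (e : Sym2 V) := e ∈ outF G c.supp.toFinset
  calc _ = ∑ c, #(E.bipartiteAbove r c) := by
        congr! with c
        rw [bipartiteAbove, filter_mem_eq_inter, inter_eq_right.2 (outF_supp_toFinset_subset G E c)]
    _ = ∑ e ∈ E, #(univ.bipartiteBelow r e) := sum_card_bipartiteAbove_eq_sum_card_bipartiteBelow _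
    _ ≤ 2 * #E := by
        rw [mul_comm]
        exact sum_le_card_nsmul _ _ _ fun e _ ↦ card_filter_mem_outF_supp_le_two G _ e

theorem card_le_mul_card_of_forall_not_reachable {k : ℕ}
    (hexp : ∀ S : Finset V, 2 * #S ≤ Fintype.card V → #S ≤ k * #(outF G S))
    {σ : V → V} (hσ : σ.Injective) (E : Finset (Sym2 V))
    (hcut : ∀ v, ¬ (G.deleteEdges ↑E).Reachable v (σ v)) :
    Fintype.card V ≤ 2 * k * #E :=
  calc Fintype.card V = ∑ c : (G.deleteEdges ↑E).ConnectedComponent, #c.supp.toFinset :=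
        (sum_card_supp_toFinset _).symm
    _ ≤ ∑ c : (G.deleteEdges ↑E).ConnectedComponent, k * #(outF G c.supp.toFinset) :=
        sum_le_sum fun c _ ↦ hexp _ (two_mul_card_supp_le hσ hcut c)
    _ ≤ 2 * k * #E := by
        rw [← mul_sum, mul_comm 2, mul_assoc]
        exact Nat.mul_le_mul_left k (sum_card_outF_supp_le G E)

end SimpleGraph

theorem stmt_15_general {V : Type*} [Fintype V] [DecidableEq V] (G : SimpleGraph V)
    [DecidableRel G.Adj] (d : ℕ) (hdeg : ∀ v, G.degree v ≤ d)
    (hexp : ∀ S : Finset V, 2 * S.card ≤ Fintype.card V →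
      S.card ≤ 2 * (outF G S).card)
    (σ : V → V) (hinv : ∀ v, σ (σ v) = v)
    (β ℓ : ℝ) (hℓ : ℓ = 4 * d * β)
    (E' E'' : Finset (Sym2 V))
    (hcover : E' ∪ E'' = G.edgeFinset)
    (hround : ∃ Eint ⊆ E'', ((Eint.card : ℝ) ≤ β * ((E''.card : ℝ) / ℓ)) ∧
      ∀ v, ¬ (G.deleteEdges ↑(E' ∪ Eint)).Reachable v (σ v)) :
    (∀ Estar : Finset (Sym2 V), Estar ⊆ G.edgeFinset →
      (∀ v, ¬ (G.deleteEdges ↑Estar).Reachable v (σ v)) →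
      (Fintype.card V : ℝ) ≤ 4 * Estar.card) ∧
    (Fintype.card V : ℝ) / 4 - d * Fintype.card V * β / (2 * ℓ) ≤ E'.card ∧
    (Fintype.card V : ℝ) / 8 ≤ E'.card := by
  set n : ℝ := (Fintype.card V : ℝ) with hn
  have hmulticut (Estar : Finset (Sym2 V))
      (hcut : ∀ v, ¬ (G.deleteEdges ↑Estar).Reachable v (σ v)) : n ≤ 4 * #Estar := by
    rw [hn]
    exact_mod_cast G.card_le_mul_card_of_forall_not_reachable hexp
      (Function.LeftInverse.injective hinv) Estar hcut
  obtain ⟨Eint, hEint, hEint_card, hEint_cut⟩ := hround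
  have hE'' : 2 * (#E'' : ℝ) ≤ d * n := by
    have := (card_le_card (hcover ▸ subset_union_right : E'' ⊆ G.edgeFinset))
    rw [hn]
    exact_mod_cast (Nat.mul_le_mul_left 2 this).trans (G.two_mul_card_edgeFinset_le hdeg)
  have hβℓ : 0 ≤ β / ℓ := by
    rw [hℓ]
    rcases le_total 0 β with hβ | hβ
    · positivity
    · exact div_nonneg_of_nonpos hβ (mul_nonpos_of_nonneg_of_nonpos (by positivity) hβ)
  have hgreedy : n / 4 - d * n * β / (2 * ℓ) ≤ #E' := by
    have hcut : n ≤ 4 * (#E' + #Eint) := (hmulticut _ hEint_cut).trans (by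
      exact_mod_cast Nat.mul_le_mul_left 4 (card_union_le E' Eint))
    have hround : (#Eint : ℝ) ≤ d * n * β / (2 * ℓ) := calc
      (#Eint : ℝ) ≤ β / ℓ * #E'' := hEint_card.trans_eq (by ring)
      _ ≤ β / ℓ * (d * n / 2) := by gcongr; linarith
      _ = d * n * β / (2 * ℓ) := by ring
    linarith
  -- `d * β / (d * β)` is `1`, or `0` in the degenerate case `d * β = 0`.
  have hloss : d * n * β / (2 * ℓ) ≤ n / 8 := calc
    d * n * β / (2 * ℓ) = n / 8 * (d * β / (d * β)) := by rw [hℓ]; ring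
    _ ≤ n / 8 := mul_le_of_le_one_right (by positivity) (div_self_le_one _)
  exact ⟨fun Estar _ ↦ hmulticut Estar, hgreedy, by linarith⟩

/-- Let `G` be an `n`-vertex `1/2`-expander of maximum degree `d`, with demand pairs
forming a perfect matching (a fixed-point-free involution `σ`).  Then every multicut
for these demands has size at least `n/4`; moreover, if the greedy process partitions
the edges into deleted edges `E'` and remaining edges `E''`, and a `β(n)`-rounding of
the fractional multicut `1/ℓ` on `E''` together with `E'` forms a multicut, then
`|E'| ≥ n/4 − d·n·β/(2ℓ)`, and with `ℓ = 4dβ`, `|E'| ≥ n/8`. -/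
theorem stmt_15 {V : Type*} [Fintype V] [DecidableEq V] (G : SimpleGraph V)
    [DecidableRel G.Adj] (d : ℕ) (hd : 1 ≤ d) (hdeg : ∀ v, G.degree v ≤ d)
    (hexp : ∀ S : Finset V, 2 * S.card ≤ Fintype.card V →
      S.card ≤ 2 * (outF G S).card)
    (σ : V → V) (hinv : ∀ v, σ (σ v) = v) (hff : ∀ v, σ v ≠ v)
    (β ℓ : ℝ) (hβ : 1 ≤ β) (hℓ : ℓ = 4 * d * β)
    (E' E'' : Finset (Sym2 V)) (hpart : Disjoint E' E'')
    (hcover : E' ∪ E'' = G.edgeFinset)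
    (hround : ∃ Eint ⊆ E'', ((Eint.card : ℝ) ≤ β * ((E''.card : ℝ) / ℓ)) ∧
      ∀ v, ¬ (G.deleteEdges ↑(E' ∪ Eint)).Reachable v (σ v)) :
    (∀ Estar : Finset (Sym2 V), Estar ⊆ G.edgeFinset →
      (∀ v, ¬ (G.deleteEdges ↑Estar).Reachable v (σ v)) →
      (Fintype.card V : ℝ) ≤ 4 * Estar.card) ∧
    (Fintype.card V : ℝ) / 4 - d * Fintype.card V * β / (2 * ℓ) ≤ E'.card ∧
    (Fintype.card V : ℝ) / 8 ≤ E'.card :=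
  stmt_15_general G d hdeg hexp σ hinv β ℓ hℓ E' E'' hcover hround
end

section
/- Suppose G=(V,E) is π-flow-well-linked for a weight function π: V → ℝ≥0 (i.e., every pair (x,y) of vertices can simultaneously send π(x)·π(y)/π(V) flow units to each other with no congestion). Let 𝒢 be a partition of the terminal set into groups U with 2 ≤ π(U) ≤ 6, each equipped with a tree T_U, the trees pairwise edge-disjoint, and suppose each group contains at most one selected terminal. Then any matching ℳ* on the selected terminals can be fractionally routed in G with congestion at most 2. -/
open Finset

/-- A fractional routing of the demands `D` in `G` with congestion at most `c`. -/
def FracRoutable {V : Type*} [Fintype V] [DecidableEq V] (G : SimpleGraph V)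
    (D : V → V → ℝ) (c : ℝ) : Prop :=
  ∃ (n : ℕ) (p : Fin n → Σ (u : V) (v : V), G.Walk u v) (w : Fin n → ℝ),
    (∀ i, 0 ≤ w i) ∧
    (∀ u v : V, ∑ i ∈ univ.filter (fun i => (p i).1 = u ∧ (p i).2.1 = v), w i = D u v) ∧
    (∀ e ∈ G.edgeSet, ∑ i ∈ univ.filter (fun i => e ∈ (p i).2.2.edges), w i ≤ c)

/-!
Each selected terminal `s`, lying in the group `U`, spreads its unit along the tree `T_U` over
`U`, vertex `x` receiving `π x / π U`, and continues along the walks of the well-linked flow that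
leave `U`, scaled by `1 / π U ≤ 1 / 2`. Every vertex `y` then receives `π y / π V`, whatever `s`
is, so for a matched pair `(a, b)` the half-flow of `a` can be glued to the reversed half-flow of
`b` at these common midpoints. The trees are edge-disjoint and the groups of the selected
terminals are disjoint, so each edge carries at most `1` from the trees and at most `1 / 2` from
the well-linked flow.
-/

section

open Finsupp

variable {V : Type*} {G : SimpleGraph V}

lemma Finset.sum_indicator_le_of_pairwiseDisjoint {ι α : Type*} {s : Finset ι} {S : ι → Set α}
    (h : (s : Set ι).PairwiseDisjoint S) {f : α → ℝ} (hf : 0 ≤ f) (a : α) :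
    ∑ i ∈ s, (S i).indicator f a ≤ f a := by
  rw [← Finset.indicator_biUnion_apply s S h]
  exact Set.indicator_le_self' (fun x _ => hf x) a

lemma exists_injOn_part [DecidableEq V] {𝒢 : Finset (Finset V)} {sel : Finset V}
    (hsel : sel ⊆ 𝒢.sup id) (hone : ∀ U ∈ 𝒢, (sel ∩ U).card ≤ 1) :
    ∃ g : V → Finset V, (∀ s ∈ sel, g s ∈ 𝒢 ∧ s ∈ g s) ∧ Set.InjOn g sel := by
  have : ∀ s ∈ sel, ∃ U ∈ 𝒢, s ∈ U := fun s hs => by simpa using Finset.mem_sup.mp (hsel hs)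
  choose! g hg hsg using this
  refine ⟨g, fun s hs => ⟨hg s hs, hsg s hs⟩, fun s hs s' hs' h => ?_⟩
  exact Finset.card_le_one.mp (hone _ (hg s hs)) s (Finset.mem_inter.mpr ⟨hs, hsg s hs⟩) s'
    (Finset.mem_inter.mpr ⟨hs', h ▸ hsg s' hs'⟩)

lemma sum_fst_add_snd_le_of_matching {α : Type*} [DecidableEq α] {M : Finset (α × α)}
    {s : Finset α} {f : α → ℝ} (hf : ∀ x ∈ s, 0 ≤ f x)
    (hM : ∀ pr ∈ M, pr.1 ∈ s ∧ pr.2 ∈ s ∧ pr.1 ≠ pr.2)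
    (hM' : ∀ pr ∈ M, ∀ pr' ∈ M, pr ≠ pr' →
      pr.1 ≠ pr'.1 ∧ pr.1 ≠ pr'.2 ∧ pr.2 ≠ pr'.1 ∧ pr.2 ≠ pr'.2) :
    ∑ m ∈ M, (f m.1 + f m.2) ≤ ∑ x ∈ s, f x := by
  have hfst : Set.InjOn Prod.fst M := fun m hm m' hm' h =>
    by_contra fun hne => (hM' m hm m' hm' hne).1 h
  have hsnd : Set.InjOn Prod.snd M := fun m hm m' hm' h =>
    by_contra fun hne => (hM' m hm m' hm' hne).2.2.2 h
  have hdisj : Disjoint (M.image Prod.fst) (M.image Prod.snd) := by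
    simp only [Finset.disjoint_left, Finset.mem_image]
    rintro _ ⟨m, hm, rfl⟩ ⟨m', hm', h⟩
    by_cases hmm : m = m'
    · subst hmm
      exact (hM m hm).2.2 h.symm
    · exact (hM' m hm m' hm' hmm).2.1 h.symm
  rw [Finset.sum_add_distrib, ← Finset.sum_image hfst, ← Finset.sum_image hsnd,
    ← Finset.sum_union hdisj]
  refine Finset.sum_le_sum_of_subset_of_nonneg ?_ fun x hx _ => hf x hx
  simp only [Finset.union_subset_iff, Finset.image_subset_iff]
  exact ⟨fun m hm => (hM m hm).1, fun m hm => (hM m hm).2.1⟩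

abbrev WalkFlow (G : SimpleGraph V) := (Σ u v, G.Walk u v) →₀ ℝ

namespace WalkFlow

noncomputable def eval (F : WalkFlow G) (φ : (Σ u v, G.Walk u v) → ℝ) : ℝ :=
  linearCombination ℝ φ F

lemma eval_eq_sum (F : WalkFlow G) (φ : (Σ u v, G.Walk u v) → ℝ) :
    F.eval φ = ∑ γ ∈ F.support, F γ * φ γ := by
  simp [eval, linearCombination_apply, Finsupp.sum]

lemma eval_sum_single {ι : Type*} (s : Finset ι) (q : ι → Σ u v, G.Walk u v) (w : ι → ℝ)
    (φ : (Σ u v, G.Walk u v) → ℝ) :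
    eval (∑ i ∈ s, single (q i) (w i)) φ = ∑ i ∈ s, w i * φ (q i) := by
  simp [eval, map_sum]

lemma eval_fun_sum {ι : Type*} (F : WalkFlow G) (s : Finset ι)
    (φ : ι → (Σ u v, G.Walk u v) → ℝ) :
    F.eval (fun γ => ∑ i ∈ s, φ i γ) = ∑ i ∈ s, F.eval (φ i) := by
  simp only [eval_eq_sum, Finset.mul_sum]
  exact Finset.sum_comm

lemma eval_const (F : WalkFlow G) (c : ℝ) : F.eval (fun _ => c) = c * F.eval 1 := by
  simp only [eval_eq_sum, Pi.one_apply, mul_one, Finset.sum_mul, mul_comm c]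

lemma eval_mono {F : WalkFlow G} (hF : 0 ≤ F) {φ ψ : (Σ u v, G.Walk u v) → ℝ}
    (h : ∀ γ ∈ F.support, φ γ ≤ ψ γ) : F.eval φ ≤ F.eval ψ := by
  simp only [eval_eq_sum]
  exact Finset.sum_le_sum fun γ hγ => mul_le_mul_of_nonneg_left (h γ hγ) (hF γ)

lemma eval_congr {F : WalkFlow G} {φ ψ : (Σ u v, G.Walk u v) → ℝ}
    (h : ∀ γ ∈ F.support, φ γ = ψ γ) : F.eval φ = F.eval ψ := by
  simp only [eval_eq_sum]
  exact Finset.sum_congr rfl fun γ hγ => by rw [h γ hγ]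

lemma eval_nonneg {F : WalkFlow G} (hF : 0 ≤ F) {φ : (Σ u v, G.Walk u v) → ℝ}
    (hφ : ∀ γ, 0 ≤ φ γ) : 0 ≤ F.eval φ := by
  rw [eval_eq_sum]
  exact Finset.sum_nonneg fun γ _ => mul_nonneg (hF γ) (hφ γ)

lemma eval_zero_right (F : WalkFlow G) : F.eval 0 = 0 := by
  simp [eval]

lemma eval_smul (c : ℝ) (F : WalkFlow G) (φ : (Σ u v, G.Walk u v) → ℝ) :
    (c • F).eval φ = c * F.eval φ :=
  map_smul _ c F

lemma eval_finset_sum {ι : Type*} (s : Finset ι) (F : ι → WalkFlow G)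
    (φ : (Σ u v, G.Walk u v) → ℝ) : eval (∑ i ∈ s, F i) φ = ∑ i ∈ s, (F i).eval φ :=
  map_sum _ _ _

lemma apply_le_eval {F : WalkFlow G} (hF : 0 ≤ F) {φ : (Σ u v, G.Walk u v) → ℝ}
    (hφ : ∀ γ, 0 ≤ φ γ) {γ : Σ u v, G.Walk u v} (hγ : φ γ = 1) : F γ ≤ F.eval φ := by
  by_cases hmem : γ ∈ F.support
  · rw [eval_eq_sum]
    calc F γ = F γ * φ γ := by rw [hγ, mul_one]
      _ ≤ _ := Finset.single_le_sum (f := fun δ => F δ * φ δ)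
        (fun δ _ => mul_nonneg (hF δ) (hφ δ)) hmem
  · rw [notMem_support_iff.mp hmem]
    exact eval_nonneg hF hφ

lemma eval_filter (F : WalkFlow G) (p : (Σ u v, G.Walk u v) → Prop) [DecidablePred p]
    (φ : (Σ u v, G.Walk u v) → ℝ) :
    eval (F.filter p) φ = F.eval ({γ | p γ}.indicator φ) := by
  simp only [eval_eq_sum, support_filter, Finset.sum_filter, filter_apply, Set.indicator_apply,
    Set.mem_ofPred_eq, mul_ite, mul_zero]
  exact Finset.sum_congr rfl fun γ _ => by split_ifs <;> rfl

noncomputable def mass (F : WalkFlow G) : ℝ := F.eval 1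

lemma eval_boole_eq_sum_filter (F : WalkFlow G) (P : (Σ u v, G.Walk u v) → Prop) [DecidablePred P] :
    F.eval (fun γ => if P γ then 1 else 0) =
      ∑ i ∈ Finset.univ.filter (fun i => P (F.support.equivFin.symm i).1),
        F (F.support.equivFin.symm i) := by
  rw [Finset.sum_filter, eval_eq_sum, ← Finset.sum_coe_sort F.support]
  simp only [mul_ite, mul_one, mul_zero]
  exact Fintype.sum_equiv F.support.equivFin _ _ fun γ => by simp

noncomputable def revEquiv : (Σ u v, G.Walk u v) ≃ (Σ u v, G.Walk u v) :=
  Function.Involutive.toPerm (fun γ => ⟨γ.2.1, γ.1, γ.2.2.reverse⟩) fun γ => by simp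

@[simp]
lemma revEquiv_apply (γ : Σ u v, G.Walk u v) : revEquiv γ = ⟨γ.2.1, γ.1, γ.2.2.reverse⟩ := rfl

noncomputable def reverse (F : WalkFlow G) : WalkFlow G := equivMapDomain revEquiv F

lemma reverse_apply (F : WalkFlow G) (γ : Σ u v, G.Walk u v) : F.reverse γ = F (revEquiv γ) :=
  equivMapDomain_apply _ _ _

lemma reverse_nonneg {F : WalkFlow G} (hF : 0 ≤ F) : 0 ≤ F.reverse :=
  fun γ => by simpa only [reverse_apply, Finsupp.coe_zero, Pi.zero_apply] using hF (revEquiv γ)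

lemma eval_reverse (F : WalkFlow G) (φ : (Σ u v, G.Walk u v) → ℝ) :
    F.reverse.eval φ = F.eval (φ ∘ revEquiv) := by
  rw [eval, reverse, equivMapDomain_eq_mapDomain, linearCombination_mapDomain]
  rfl

lemma tgt_eq_of_mem_support_reverse {F : WalkFlow G} {b : V} (h : ∀ γ ∈ F.support, γ.1 = b) :
    ∀ γ ∈ F.reverse.support, γ.2.1 = b := fun γ hγ =>
  h (revEquiv γ) (mem_support_iff.mpr (by rwa [← reverse_apply, ← mem_support_iff]))

lemma mass_reverse (F : WalkFlow G) : F.reverse.mass = F.mass := eval_reverse F 1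

def append (γ δ : Σ u v, G.Walk u v) (h : γ.2.1 = δ.1) : Σ u v, G.Walk u v :=
  ⟨γ.1, δ.2.1, γ.2.2.append (δ.2.2.copy h.symm rfl)⟩

variable [DecidableEq V]

noncomputable def outMass (F : WalkFlow G) (x : V) : ℝ :=
  F.eval fun γ => if γ.1 = x then 1 else 0

noncomputable def inMass (F : WalkFlow G) (y : V) : ℝ :=
  F.eval fun γ => if γ.2.1 = y then 1 else 0

noncomputable def demand (F : WalkFlow G) (u v : V) : ℝ :=
  F.eval fun γ => if γ.1 = u ∧ γ.2.1 = v then 1 else 0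

noncomputable def load (F : WalkFlow G) (e : Sym2 V) : ℝ :=
  F.eval fun γ => if e ∈ γ.2.2.edges then 1 else 0

noncomputable def loadFrom (F : WalkFlow G) (U : Finset V) (e : Sym2 V) : ℝ :=
  F.eval ({γ | γ.1 ∈ U}.indicator fun γ => if e ∈ γ.2.2.edges then 1 else 0)

lemma mass_eq_sum_inMass [Fintype V] (F : WalkFlow G) : F.mass = ∑ y, F.inMass y := by
  simp only [mass, inMass, ← eval_fun_sum, Finset.sum_ite_eq, Finset.mem_univ, if_true]
  rfl

lemma loadFrom_nonneg {F : WalkFlow G} (hF : 0 ≤ F) (U : Finset V) (e : Sym2 V) :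
    0 ≤ F.loadFrom U e :=
  eval_nonneg hF fun γ => Set.indicator_nonneg (fun _ _ => by positivity) γ

lemma sum_loadFrom_le {ι : Type*} {F : WalkFlow G} (hF : 0 ≤ F) {s : Finset ι}
    {U : ι → Finset V} (hU : (s : Set ι).PairwiseDisjoint fun i => (U i : Set V)) (e : Sym2 V) :
    ∑ i ∈ s, F.loadFrom (U i) e ≤ F.load e := by
  simp only [loadFrom, ← eval_fun_sum]
  exact eval_mono hF fun γ _ => Finset.sum_indicator_le_of_pairwiseDisjoint
    (fun i hi j hj hij => (hU hi hj hij).preimage fun γ : Σ u v, G.Walk u v => γ.1)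
    (fun _ => by positivity) γ

lemma inMass_pos {F : WalkFlow G} (hF : 0 ≤ F) {γ : Σ u v, G.Walk u v} (hγ : γ ∈ F.support) :
    0 < F.inMass γ.2.1 :=
  (lt_of_le_of_ne (hF γ) (mem_support_iff.mp hγ).symm).trans_le
    (apply_le_eval hF (fun _ => by positivity) (if_pos rfl))

lemma outMass_pos {F : WalkFlow G} (hF : 0 ≤ F) {γ : Σ u v, G.Walk u v} (hγ : γ ∈ F.support) :
    0 < F.outMass γ.1 :=
  (lt_of_le_of_ne (hF γ) (mem_support_iff.mp hγ).symm).trans_le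
    (apply_le_eval hF (fun _ => by positivity) (if_pos rfl))

lemma outMass_reverse (F : WalkFlow G) (x : V) : F.reverse.outMass x = F.inMass x :=
  eval_reverse F _

lemma load_reverse (F : WalkFlow G) (e : Sym2 V) : F.reverse.load e = F.load e := by
  simp [load, eval_reverse, Function.comp_def]

lemma _root_.fracRoutable_iff [Fintype V] {D : V → V → ℝ} {c : ℝ} :
    FracRoutable G D c ↔ ∃ F : WalkFlow G, 0 ≤ F ∧ (∀ u v, F.demand u v = D u v) ∧
      ∀ e ∈ G.edgeSet, F.load e ≤ c := by
  constructor
  · rintro ⟨n, p, w, hw, hD, hc⟩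
    refine ⟨∑ i, single (p i) (w i), Finset.sum_nonneg fun i _ => single_nonneg.mpr (hw i),
      fun u v => ?_, fun e he => ?_⟩
    · simpa only [demand, eval_sum_single, mul_ite, mul_one, mul_zero, ← Finset.sum_filter]
        using hD u v
    · simpa only [load, eval_sum_single, mul_ite, mul_one, mul_zero, ← Finset.sum_filter]
        using hc e he
  · rintro ⟨F, hF, hD, hc⟩
    refine ⟨_, fun i => (F.support.equivFin.symm i).1, fun i => F (F.support.equivFin.symm i),
      fun i => hF _, fun u v => ?_, fun e he => ?_⟩
    · rw [← hD, demand, eval_boole_eq_sum_filter]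
    · exact (eval_boole_eq_sum_filter F _).symm.trans_le (hc e he)

noncomputable def glueWeight (P Q : WalkFlow G) (γ δ : Σ u v, G.Walk u v) : ℝ :=
  if γ.2.1 = δ.1 then P γ * Q δ / P.inMass γ.2.1 else 0

/-- Every walk `γ` of `P` is continued by the walks of `Q` leaving its endpoint, each receiving
the share `Q δ / P.inMass γ.2.1` of `P γ`: the coupling of `P` and `Q` through the midpoint. -/
noncomputable def glue (P Q : WalkFlow G) : WalkFlow G :=
  ∑ γ ∈ P.support, ∑ δ ∈ Q.support,
    if h : γ.2.1 = δ.1 then single (append γ δ h) (glueWeight P Q γ δ) else 0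

lemma eval_glue (P Q : WalkFlow G) (φ : (Σ u v, G.Walk u v) → ℝ) :
    (glue P Q).eval φ = ∑ γ ∈ P.support, ∑ δ ∈ Q.support,
      if h : γ.2.1 = δ.1 then glueWeight P Q γ δ * φ (append γ δ h) else 0 := by
  simp only [glue, eval, map_sum]
  refine Finset.sum_congr rfl fun γ _ => Finset.sum_congr rfl fun δ _ => ?_
  split_ifs <;> simp [linearCombination_single]

variable {P Q : WalkFlow G}

lemma glueWeight_nonneg (hP : 0 ≤ P) (hQ : 0 ≤ Q) (γ δ : Σ u v, G.Walk u v) :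
    0 ≤ glueWeight P Q γ δ := by
  unfold glueWeight
  split_ifs
  · exact div_nonneg (mul_nonneg (hP γ) (hQ δ)) (eval_nonneg hP fun _ => by positivity)
  · exact le_rfl

lemma glue_nonneg (hP : 0 ≤ P) (hQ : 0 ≤ Q) : 0 ≤ glue P Q :=
  Finset.sum_nonneg fun γ _ => Finset.sum_nonneg fun δ _ => by
    split_ifs
    · exact single_nonneg.mpr (glueWeight_nonneg hP hQ γ δ)
    · exact le_rfl

lemma sum_glueWeight_left (hP : 0 ≤ P) (hPQ : ∀ y, P.inMass y = Q.outMass y)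
    {γ : Σ u v, G.Walk u v} (hγ : γ ∈ P.support) :
    ∑ δ ∈ Q.support, glueWeight P Q γ δ = P γ := by
  have hpos := inMass_pos hP hγ
  calc ∑ δ ∈ Q.support, glueWeight P Q γ δ = P γ / P.inMass γ.2.1 * Q.outMass γ.2.1 := by
        rw [outMass, eval_eq_sum, Finset.mul_sum]
        refine Finset.sum_congr rfl fun δ _ => ?_
        by_cases h : γ.2.1 = δ.1
        · simp [glueWeight, h, mul_div_right_comm]
        · simp [glueWeight, h, Ne.symm h]
    _ = P γ := by rw [← hPQ, div_mul_cancel₀ _ hpos.ne']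

lemma sum_glueWeight_right (hQ : 0 ≤ Q) (hPQ : ∀ y, P.inMass y = Q.outMass y)
    {δ : Σ u v, G.Walk u v} (hδ : δ ∈ Q.support) :
    ∑ γ ∈ P.support, glueWeight P Q γ δ = Q δ := by
  have hpos := outMass_pos hQ hδ
  calc ∑ γ ∈ P.support, glueWeight P Q γ δ = Q δ / Q.outMass δ.1 * P.inMass δ.1 := by
        rw [inMass, eval_eq_sum, Finset.mul_sum]
        refine Finset.sum_congr rfl fun γ _ => ?_
        by_cases h : γ.2.1 = δ.1
        · simp only [glueWeight, h, hPQ, if_true, mul_one]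
          ring
        · simp [glueWeight, h]
    _ = Q δ := by rw [hPQ, div_mul_cancel₀ _ hpos.ne']

lemma eval_add_eval_eq_sum_glueWeight (hP : 0 ≤ P) (hQ : 0 ≤ Q)
    (hPQ : ∀ y, P.inMass y = Q.outMass y) (f g : (Σ u v, G.Walk u v) → ℝ) :
    P.eval f + Q.eval g =
      ∑ γ ∈ P.support, ∑ δ ∈ Q.support, glueWeight P Q γ δ * (f γ + g δ) := by
  simp only [mul_add, Finset.sum_add_distrib, eval_eq_sum]
  congr 1
  · refine Finset.sum_congr rfl fun γ hγ => ?_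
    rw [← Finset.sum_mul, sum_glueWeight_left hP hPQ hγ]
  · rw [Finset.sum_comm]
    refine Finset.sum_congr rfl fun δ hδ => ?_
    rw [← Finset.sum_mul, sum_glueWeight_right hQ hPQ hδ]

lemma eval_glue_le (hP : 0 ≤ P) (hQ : 0 ≤ Q) (hPQ : ∀ y, P.inMass y = Q.outMass y)
    {φ f g : (Σ u v, G.Walk u v) → ℝ}
    (h : ∀ γ ∈ P.support, ∀ δ ∈ Q.support, ∀ hγδ, φ (append γ δ hγδ) ≤ f γ + g δ) :
    (glue P Q).eval φ ≤ P.eval f + Q.eval g := by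
  rw [eval_glue, eval_add_eval_eq_sum_glueWeight hP hQ hPQ]
  gcongr with γ hγ δ hδ
  split_ifs with hγδ
  · exact mul_le_mul_of_nonneg_left (h γ hγ δ hδ hγδ) (glueWeight_nonneg hP hQ γ δ)
  · simp [glueWeight, hγδ]

lemma eval_glue_eq (hP : 0 ≤ P) (hQ : 0 ≤ Q) (hPQ : ∀ y, P.inMass y = Q.outMass y)
    {φ f g : (Σ u v, G.Walk u v) → ℝ}
    (h : ∀ γ ∈ P.support, ∀ δ ∈ Q.support, ∀ hγδ, φ (append γ δ hγδ) = f γ + g δ) :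
    (glue P Q).eval φ = P.eval f + Q.eval g := by
  rw [eval_glue, eval_add_eval_eq_sum_glueWeight hP hQ hPQ]
  refine Finset.sum_congr rfl fun γ hγ => Finset.sum_congr rfl fun δ hδ => ?_
  split_ifs with hγδ
  · rw [h γ hγ δ hδ hγδ]
  · simp [glueWeight, hγδ]

lemma src_eq_of_mem_support_glue {a : V} (h : ∀ γ ∈ P.support, γ.1 = a) :
    ∀ γ ∈ (glue P Q).support, γ.1 = a := by
  intro γ hγ
  by_contra hne
  refine mem_support_iff.mp hγ ?_
  simp only [glue, Finsupp.finsetSum_apply]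
  refine Finset.sum_eq_zero fun γ' hγ' => Finset.sum_eq_zero fun δ _ => ?_
  split_ifs with h'
  · rw [single_apply, if_neg]
    rintro rfl
    exact hne (h γ' hγ')
  · rfl

lemma load_glue_le (hP : 0 ≤ P) (hQ : 0 ≤ Q) (hPQ : ∀ y, P.inMass y = Q.outMass y)
    (e : Sym2 V) : (glue P Q).load e ≤ P.load e + Q.load e := by
  refine eval_glue_le hP hQ hPQ fun γ _ δ _ hγδ => ?_
  simp only [append, SimpleGraph.Walk.edges_append, SimpleGraph.Walk.edges_copy, List.mem_append]
  split_ifs <;> simp_all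

lemma demand_glue_reverse (hP : 0 ≤ P) (hQ : 0 ≤ Q) {a b : V}
    (hPa : ∀ γ ∈ P.support, γ.1 = a) (hQb : ∀ γ ∈ Q.support, γ.1 = b)
    (hPQ : ∀ y, P.inMass y = Q.inMass y) (hQ1 : Q.mass = 1) (u v : V) :
    (glue P Q.reverse).demand u v = if u = a ∧ v = b then 1 else 0 := by
  rw [demand, eval_glue_eq hP (reverse_nonneg hQ) (fun y => by rw [outMass_reverse, hPQ])
    (f := 0) (g := fun _ => if u = a ∧ v = b then 1 else 0) fun γ hγ δ hδ _ => by
      simp [append, hPa γ hγ, tgt_eq_of_mem_support_reverse hQb δ hδ, eq_comm]]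
  rw [eval_const, ← mass, mass_reverse, hQ1, eval_zero_right, zero_add, mul_one]

lemma eval_boole_src_mem_tgt_mem (F : WalkFlow G) (X Y : Finset V) :
    F.eval (fun γ => if γ.1 ∈ X ∧ γ.2.1 ∈ Y then 1 else 0) = ∑ x ∈ X, ∑ y ∈ Y, F.demand x y := by
  simp only [demand, ← eval_fun_sum]
  refine eval_congr fun γ _ => ?_
  simp only [ite_and]
  split_ifs <;> simp_all

lemma _root_.SimpleGraph.Subgraph.Connected.exists_walkFlow_spread {H : G.Subgraph}
    (hH : H.Connected) {U : Finset V} (hU : ↑U ⊆ H.verts) {s : V} (hs : s ∈ H.verts)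
    {μ : V → ℝ} (hμ : ∀ x ∈ U, 0 ≤ μ x) :
    ∃ T : WalkFlow G, 0 ≤ T ∧ (∀ γ ∈ T.support, γ.1 = s) ∧
      (∀ y, T.inMass y = if y ∈ U then μ y else 0) ∧
      ∀ e, T.load e ≤ H.edgeSet.indicator (fun _ => ∑ x ∈ U, μ x) e := by
  have hwalk : ∀ x ∈ U, ∃ γ : Σ u v, G.Walk u v, γ.1 = s ∧ γ.2.1 = x ∧ γ.2.2.toSubgraph ≤ H :=
    fun x hx =>
      have ⟨p, hp⟩ := (H.connected_iff_forall_exists_walk_subgraph.mp hH).2 hs (hU hx)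
      ⟨⟨s, x, p⟩, rfl, rfl, hp⟩
  have : Nonempty (Σ u v, G.Walk u v) := ⟨⟨s, s, .nil⟩⟩
  choose! q hqs hqt hqH using hwalk
  refine ⟨∑ x ∈ U, single (q x) (μ x),
    Finset.sum_nonneg fun x hx => single_nonneg.mpr (hμ x hx), fun γ hγ => ?_, fun y => ?_,
    fun e => ?_⟩
  · obtain ⟨x, hx, hγx⟩ := Finset.mem_biUnion.mp (support_finsetSum hγ)
    rw [Finset.mem_singleton.mp (support_single_subset hγx)]
    exact hqs x hx
  · rw [inMass, eval_sum_single, ← Finset.sum_ite_eq' U y μ]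
    exact Finset.sum_congr rfl fun x hx => by simp [hqt x hx]
  · rw [load, eval_sum_single]
    by_cases he : e ∈ H.edgeSet
    · rw [Set.indicator_of_mem he]
      refine Finset.sum_le_sum fun x hx => mul_le_of_le_one_right (hμ x hx) ?_
      split_ifs <;> norm_num
    · rw [Set.indicator_of_notMem he]
      refine (Finset.sum_eq_zero fun x hx => ?_).le
      rw [if_neg fun hex => he (SimpleGraph.Subgraph.edgeSet_mono (hqH x hx)
        ((SimpleGraph.Walk.mem_edges_toSubgraph _).mpr hex)), mul_zero]

section WellLinked

variable [Fintype V] {π : V → ℝ} {W : WalkFlow G}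

lemma outMass_filter_src_mem (hS : ∑ v, π v ≠ 0)
    (hW : ∀ u v, W.demand u v = π u * π v / ∑ v, π v) (U : Finset V) (x : V) :
    outMass (W.filter fun γ => γ.1 ∈ U) x = if x ∈ U then π x else 0 := by
  have hφ : {γ : Σ u v, G.Walk u v | γ.1 ∈ U}.indicator
      (fun γ => if γ.1 = x then (1 : ℝ) else 0) =
        fun γ => if γ.1 ∈ U.filter (· = x) ∧ γ.2.1 ∈ Finset.univ then 1 else 0 := by
    ext γ; by_cases h : γ.1 = x <;> simp [Set.indicator_apply, h]
  rw [outMass, eval_filter, hφ, eval_boole_src_mem_tgt_mem, Finset.filter_eq']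
  split_ifs
  · simp only [Finset.sum_singleton, hW, ← Finset.sum_div, ← Finset.mul_sum]
    field_simp
  · simp

lemma inMass_filter_src_mem (hW : ∀ u v, W.demand u v = π u * π v / ∑ v, π v)
    (U : Finset V) (y : V) :
    inMass (W.filter fun γ => γ.1 ∈ U) y = (∑ x ∈ U, π x) * π y / ∑ v, π v := by
  have hφ : {γ : Σ u v, G.Walk u v | γ.1 ∈ U}.indicator
      (fun γ => if γ.2.1 = y then (1 : ℝ) else 0) =
        fun γ => if γ.1 ∈ U ∧ γ.2.1 ∈ ({y} : Finset V) then 1 else 0 := by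
    ext γ; simp [Set.indicator_apply, ite_and]
  rw [inMass, eval_filter, hφ, eval_boole_src_mem_tgt_mem]
  simp only [Finset.sum_singleton, hW, ← Finset.sum_div, ← Finset.sum_mul]

lemma exists_hopFlow (hS : ∑ v, π v ≠ 0) (hW0 : 0 ≤ W)
    (hW : ∀ u v, W.demand u v = π u * π v / ∑ v, π v) {U : Finset V} (hU : 0 < ∑ x ∈ U, π x) :
    ∃ R : WalkFlow G, 0 ≤ R ∧ (∀ x, R.outMass x = if x ∈ U then π x / ∑ x ∈ U, π x else 0) ∧
      (∀ y, R.inMass y = π y / ∑ v, π v) ∧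
      ∀ e, R.load e = (∑ x ∈ U, π x)⁻¹ * W.loadFrom U e := by
  refine ⟨(∑ x ∈ U, π x)⁻¹ • W.filter (fun γ => γ.1 ∈ U), smul_nonneg (inv_nonneg.mpr hU.le)
    fun γ => ?_, fun x => ?_, fun y => ?_, fun e => ?_⟩
  · simp only [filter_apply]
    split_ifs
    · exact hW0 γ
    · exact le_rfl
  · rw [outMass, eval_smul, ← outMass, outMass_filter_src_mem hS hW]
    split_ifs
    · field_simp
    · rw [mul_zero]
  · rw [inMass, eval_smul, ← inMass, inMass_filter_src_mem hW]
    field_simp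
  · rw [load, eval_smul, eval_filter, loadFrom]

lemma exists_halfFlow (hπ : ∀ v, 0 ≤ π v) (hS : ∑ v, π v ≠ 0) (hW0 : 0 ≤ W)
    (hW : ∀ u v, W.demand u v = π u * π v / ∑ v, π v) {U : Finset V}
    (hU : 0 < ∑ x ∈ U, π x) {H : G.Subgraph} (hH : H.Connected) (hUH : ↑U ⊆ H.verts) {s : V}
    (hs : s ∈ U) :
    ∃ K : WalkFlow G, 0 ≤ K ∧ (∀ γ ∈ K.support, γ.1 = s) ∧
      (∀ y, K.inMass y = π y / ∑ v, π v) ∧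
      ∀ e, K.load e ≤ H.edgeSet.indicator 1 e + (∑ x ∈ U, π x)⁻¹ * W.loadFrom U e := by
  obtain ⟨T, hT, hTsrc, hTin, hTload⟩ := hH.exists_walkFlow_spread hUH (hUH hs)
    (μ := fun x => π x / ∑ x ∈ U, π x) fun x _ => div_nonneg (hπ x) hU.le
  obtain ⟨R, hR, hRout, hRin, hRload⟩ := exists_hopFlow hS hW0 hW hU
  have hTR : ∀ x, T.inMass x = R.outMass x := fun x => by rw [hTin, hRout]
  refine ⟨glue T R, glue_nonneg hT hR, src_eq_of_mem_support_glue hTsrc, fun y => ?_, fun e => ?_⟩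
  · rw [← hRin, inMass, eval_glue_eq hT hR hTR (f := 0)
      (g := fun γ => if γ.2.1 = y then 1 else 0) fun _ _ _ _ _ => (zero_add _).symm,
      eval_zero_right, zero_add, inMass]
  · calc (glue T R).load e ≤ T.load e + R.load e := load_glue_le hT hR hTR e
      _ ≤ _ := by
        rw [hRload]
        gcongr
        refine (hTload e).trans_eq (congrArg (H.edgeSet.indicator · e) (funext fun _ => ?_))
        rw [← Finset.sum_div, div_self hU.ne', Pi.one_apply]

end WellLinked

lemma exists_matching_flow [Fintype V] {sel : Finset V} {K : V → WalkFlow G} {ν : V → ℝ}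
    (hK : ∀ s ∈ sel, 0 ≤ K s) (hsrc : ∀ s ∈ sel, ∀ γ ∈ (K s).support, γ.1 = s)
    (hin : ∀ s ∈ sel, ∀ y, (K s).inMass y = ν y) (hν : ∑ y, ν y = 1) {M : Finset (V × V)}
    (hM : ∀ pr ∈ M, pr.1 ∈ sel ∧ pr.2 ∈ sel ∧ pr.1 ≠ pr.2)
    (hM' : ∀ pr ∈ M, ∀ pr' ∈ M, pr ≠ pr' →
      pr.1 ≠ pr'.1 ∧ pr.1 ≠ pr'.2 ∧ pr.2 ≠ pr'.1 ∧ pr.2 ≠ pr'.2) :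
    ∃ F : WalkFlow G, 0 ≤ F ∧ (∀ u v, F.demand u v = if (u, v) ∈ M then 1 else 0) ∧
      ∀ e, F.load e ≤ ∑ s ∈ sel, (K s).load e := by
  have hPQ : ∀ m ∈ M, ∀ y, (K m.1).inMass y = (K m.2).inMass y := fun m hm y => by
    rw [hin _ (hM m hm).1, hin _ (hM m hm).2.1]
  have hmass : ∀ s ∈ sel, (K s).mass = 1 := fun s hs => by
    rw [mass_eq_sum_inMass, ← hν]
    exact Finset.sum_congr rfl fun y _ => hin s hs y
  refine ⟨∑ m ∈ M, glue (K m.1) (K m.2).reverse, Finset.sum_nonneg fun m hm =>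
    glue_nonneg (hK _ (hM m hm).1) (reverse_nonneg (hK _ (hM m hm).2.1)), fun u v => ?_,
    fun e => ?_⟩
  · rw [demand, eval_finset_sum, ← Finset.sum_ite_eq M (u, v) fun _ => (1 : ℝ)]
    refine Finset.sum_congr rfl fun m hm => ?_
    obtain ⟨ha, hb, -⟩ := hM m hm
    rw [← demand, demand_glue_reverse (hK _ ha) (hK _ hb) (hsrc _ ha) (hsrc _ hb) (hPQ m hm)
      (hmass _ hb)]
    exact if_congr (Prod.ext_iff (x := (u, v))).symm rfl rfl
  · rw [load, eval_finset_sum]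
    refine (Finset.sum_le_sum fun m hm => ?_).trans (sum_fst_add_snd_le_of_matching
      (fun s hs => eval_nonneg (hK s hs) fun _ => by positivity) hM hM')
    obtain ⟨ha, hb, -⟩ := hM m hm
    rw [← load_reverse (K m.2)]
    exact load_glue_le (hK _ ha) (reverse_nonneg (hK _ hb))
      (fun y => by rw [outMass_reverse, hPQ m hm]) e

end WalkFlow

end

/-- If `G` is `π`-flow-well-linked (every pair `(x,y)` can simultaneously send
`π(x)π(y)/π(V)` flow units with no congestion), the terminals `𝒯` are partitioned into
groups `U` of weight `2 ≤ π(U) ≤ 6` spanned by pairwise edge-disjoint trees, and at most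
one selected terminal lies in each group, then any matching on the selected terminals
can be fractionally routed in `G` with congestion at most `2`. -/
theorem stmt_16 {V : Type*} [Fintype V] [DecidableEq V] (G : SimpleGraph V)
    (π : V → ℝ) (hπ : ∀ v, 0 ≤ π v) (hπpos : 0 < ∑ v, π v)
    (hwl : FracRoutable G (fun x y => π x * π y / ∑ v, π v) 1)
    (𝒯 : Finset V) (𝒢 : Finset (Finset V))
    (hcover : 𝒢.sup id = 𝒯)
    (hdisj : ∀ U ∈ 𝒢, ∀ U' ∈ 𝒢, U ≠ U' → Disjoint U U')
    (hπU : ∀ U ∈ 𝒢, 2 ≤ ∑ v ∈ U, π v ∧ ∑ v ∈ U, π v ≤ 6)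
    (t : Finset V → G.Subgraph)
    (htree : ∀ U ∈ 𝒢, (t U).Connected ∧ ↑U ⊆ (t U).verts)
    (htdisj : ∀ U ∈ 𝒢, ∀ U' ∈ 𝒢, U ≠ U' → Disjoint (t U).edgeSet (t U').edgeSet)
    (sel : Finset V) (hsel : sel ⊆ 𝒯)
    (hone : ∀ U ∈ 𝒢, (sel ∩ U).card ≤ 1)
    (M : Finset (V × V))
    (hM : ∀ pr ∈ M, pr.1 ∈ sel ∧ pr.2 ∈ sel ∧ pr.1 ≠ pr.2)
    (hM' : ∀ pr ∈ M, ∀ pr' ∈ M, pr ≠ pr' →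
      pr.1 ≠ pr'.1 ∧ pr.1 ≠ pr'.2 ∧ pr.2 ≠ pr'.1 ∧ pr.2 ≠ pr'.2) :
    FracRoutable G (fun u v => if (u, v) ∈ M then 1 else 0) 2 := by
  rw [fracRoutable_iff] at hwl ⊢
  obtain ⟨W, hW0, hWdem, hWload⟩ := hwl
  obtain ⟨g, hg, hginj⟩ := exists_injOn_part (hcover ▸ hsel) hone
  have hgne : ∀ s ∈ sel, ∀ s' ∈ sel, s ≠ s' → g s ≠ g s' := fun s hs s' hs' => hginj.ne hs hs'
  choose! K hK0 hKsrc hKin hKload using fun s (hs : s ∈ sel) =>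
    WalkFlow.exists_halfFlow hπ hπpos.ne' hW0 hWdem (by linarith [(hπU _ (hg s hs).1).1])
      (htree _ (hg s hs).1).1 (htree _ (hg s hs).1).2 (hg s hs).2
  obtain ⟨F, hF0, hFdem, hFload⟩ := WalkFlow.exists_matching_flow hK0 hKsrc hKin
    (by rw [← Finset.sum_div, div_self hπpos.ne']) hM hM'
  refine ⟨F, hF0, hFdem, fun e he => (hFload e).trans ?_⟩
  have htrees : ∑ s ∈ sel, (t (g s)).edgeSet.indicator 1 e ≤ (1 : ℝ) :=
    Finset.sum_indicator_le_of_pairwiseDisjoint (fun s hs s' hs' hne =>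
      htdisj _ (hg s hs).1 _ (hg s' hs').1 (hgne s hs s' hs' hne)) zero_le_one e
  have hhops : ∑ s ∈ sel, W.loadFrom (g s) e ≤ 1 :=
    (WalkFlow.sum_loadFrom_le hW0 (fun s hs s' hs' hne => Finset.disjoint_coe.mpr
      (hdisj _ (hg s hs).1 _ (hg s' hs').1 (hgne s hs s' hs' hne))) e).trans (hWload e he)
  calc ∑ s ∈ sel, (K s).load e
      ≤ ∑ s ∈ sel, ((t (g s)).edgeSet.indicator 1 e + 2⁻¹ * W.loadFrom (g s) e) :=
        Finset.sum_le_sum fun s hs => (hKload s hs e).trans <| by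
          gcongr
          exacts [WalkFlow.loadFrom_nonneg hW0 _ e, (hπU _ (hg s hs).1).1]
    _ ≤ 1 + 2⁻¹ * 1 := by
        rw [Finset.sum_add_distrib, ← Finset.mul_sum]
        gcongr
    _ ≤ 2 := by norm_num
end

section
/- Let D=(V,A) be a directed Eulerian multigraph (every vertex has in-degree equal to out-degree), T ⊆ V a set of special vertices, and suppose every ordered pair (s,s') of special vertices has λ(s,s';D) ≥ κ edge-disjoint directed paths. Then by repeatedly applying directed splitting-off (Frank/Jackson: for any vertex v ∉ T and edge a=(v,u), there is an edge b=(w,v) such that replacing a,b by (w,u) preserves λ(y,y') for all y,y' ≠ v) at all non-special vertices, one obtains a directed multigraph H̃ on vertex set T in which λ(s,s';H̃) ≥ κ for all ordered pairs of special vertices, and every edge (s,s') of H̃ corresponds to a directed s–s' path in D, with all these paths pairwise edge-disjoint. -/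
/-!
Split off pairs of edges at non-special vertices until every edge has both ends in `T`.
At `v ∉ T` with out-edge `(v, u)`, call a set dangerous if it separates `T`, contains `u` but
not `v`, and has at most `κ` out-edges; these are exactly the sets whose cut the split of
`(w, v), (v, u)` into `(w, u)` could push below `κ` when `w` lies in them. By submodularity and
(Eulerian) posimodularity of the cut function, dangerous sets are closed under union. If every
in-neighbour `w` of `v` lay in a dangerous set, the largest one `X` would receive all in-edges
of `v` while `(v, u)` enters it, so `X ∪ {v}`, which still separates `T`, would have fewer than
`κ` out-edges. Hence some split at `v` is admissible; loops at `v` are simply deleted. Every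
edge of the current multigraph carries the walk of `D` it stands for, and a split concatenates
two of them, so the walks stay pairwise edge-disjoint.
-/

open Finset

/-- `IsDiwalk ends l u v`: the list of directed edges `l` forms a directed walk from
`u` to `v` in the directed multigraph with edge-endpoint map `ends`. -/
def IsDiwalk {E V : Type*} (ends : E → V × V) : List E → V → V → Prop
  | [], u, v => u = v
  | e :: es, u, v => (ends e).1 = u ∧ IsDiwalk ends es (ends e).2 v

theorem Fin.card_filter_univ_getElem {α : Type*} (l : List α) (p : α → Prop) [DecidablePred p] :
    #{i : Fin l.length | p l[i]} = l.countP p := by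
  induction l with
  | nil => simp
  | cons a l ih =>
    refine (Fin.card_filter_univ_succ' (fun i : Fin (l.length + 1) => p (a :: l)[i])).trans ?_
    by_cases ha : p a <;> simp_all [add_comm]

theorem Multiset.countP_map_univ {α β : Type*} [Fintype α] (f : α → β) (p : β → Prop)
    [DecidablePred p] : (univ.val.map f).countP p = #{a | p (f a)} := by
  rw [Multiset.countP_map]
  rfl

/- A directed multigraph on `V` is a multiset of (tail, head) pairs. -/

section Eulerian

variable {V : Type*} {G : Multiset (V × V)} {u v w : V}

def IsEulerian (G : Multiset (V × V)) : Prop :=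
  G.map Prod.fst = G.map Prod.snd

theorem IsEulerian.countP_fst (hG : IsEulerian G) (p : V → Prop) [DecidablePred p] :
    G.countP (fun e => p e.1) = G.countP (fun e => p e.2) := by
  have := congrArg (Multiset.countP p) hG
  rwa [Multiset.countP_map, Multiset.countP_map, ← Multiset.countP_eq_card_filter,
    ← Multiset.countP_eq_card_filter] at this

theorem isEulerian_iff_countP [DecidableEq V] :
    IsEulerian G ↔ ∀ v, G.countP (fun e => e.1 = v) = G.countP (fun e => e.2 = v) := by
  simp only [IsEulerian, Multiset.ext, Multiset.count_map, ← Multiset.countP_eq_card_filter,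
    eq_comm]

theorem IsEulerian.exists_snd_eq (hG : IsEulerian G) {e : V × V} (he : e ∈ G) :
    ∃ w, (w, e.1) ∈ G := by
  obtain ⟨e', he', hee'⟩ := Multiset.mem_map.1 (hG ▸ Multiset.mem_map_of_mem Prod.fst he)
  exact ⟨e'.1, by rwa [← hee']⟩

theorem IsEulerian.exists_fst_eq (hG : IsEulerian G) {e : V × V} (he : e ∈ G) :
    ∃ u, (e.2, u) ∈ G := by
  obtain ⟨e', he', hee'⟩ := Multiset.mem_map.1 (hG.symm ▸ Multiset.mem_map_of_mem Prod.snd he)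
  exact ⟨e'.2, by rwa [← hee']⟩

theorem IsEulerian.splitOff (hG : IsEulerian ((v, u) ::ₘ (w, v) ::ₘ G)) :
    IsEulerian ((w, u) ::ₘ G) := by
  simp only [IsEulerian, Multiset.map_cons] at hG ⊢
  rw [Multiset.cons_swap u] at hG
  exact (Multiset.cons_inj_right v).1 hG

theorem IsEulerian.of_cons_self (hG : IsEulerian ((v, v) ::ₘ G)) : IsEulerian G := by
  simp only [IsEulerian, Multiset.map_cons] at hG ⊢
  exact (Multiset.cons_inj_right v).1 hG

end Eulerian

section Cuts

variable {V : Type*} [DecidableEq V]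

def outCut (G : Multiset (V × V)) (S : Finset V) : ℕ :=
  G.countP fun e => e.1 ∈ S ∧ e.2 ∉ S

def Separates (T S : Finset V) : Prop :=
  (S ∩ T).Nonempty ∧ (T \ S).Nonempty

/-- By Menger's theorem, this says `λ(s, s') ≥ κ` for all distinct `s, s' ∈ T`. -/
def IsEdgeConnectedOn (G : Multiset (V × V)) (T : Finset V) (κ : ℕ) : Prop :=
  ∀ S, Separates T S → κ ≤ outCut G S

def IsDangerous (G : Multiset (V × V)) (T : Finset V) (κ : ℕ) (v u : V) (X : Finset V) : Prop :=
  Separates T X ∧ v ∉ X ∧ u ∈ X ∧ outCut G X ≤ κ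

variable {G : Multiset (V × V)} {T X Y : Finset V} {κ : ℕ} {u v w : V}

theorem outCut_cons (e : V × V) (G : Multiset (V × V)) (S : Finset V) :
    outCut (e ::ₘ G) S = outCut G S + if e.1 ∈ S ∧ e.2 ∉ S then 1 else 0 :=
  Multiset.countP_cons _ _ _

theorem outCut_cons_self (v : V) (G : Multiset (V × V)) (S : Finset V) :
    outCut ((v, v) ::ₘ G) S = outCut G S := by
  by_cases hv : v ∈ S <;> simp [outCut_cons, hv]

theorem outCut_map {α : Type*} (f : α → V × V) (R : Multiset α) (S : Finset V) :
    outCut (R.map f) S = R.countP fun x => (f x).1 ∈ S ∧ (f x).2 ∉ S := by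
  rw [outCut, Multiset.countP_map, Multiset.countP_eq_card_filter]

theorem outCut_add_outCut (G : Multiset (V × V)) (X Y : Finset V) :
    outCut G X + outCut G Y = outCut G (X ∪ Y) + outCut G (X ∩ Y)
      + G.countP (fun e => e.1 ∈ X \ Y ∧ e.2 ∈ Y \ X)
      + G.countP (fun e => e.1 ∈ Y \ X ∧ e.2 ∈ X \ Y) := by
  induction G using Multiset.induction_on with
  | empty => simp [outCut]
  | cons e G ih =>
    simp only [outCut, Multiset.countP_cons] at ih ⊢
    by_cases h1 : e.1 ∈ X <;> by_cases h2 : e.1 ∈ Y <;> by_cases h3 : e.2 ∈ X <;>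
      by_cases h4 : e.2 ∈ Y <;> simp [h1, h2, h3, h4] at ih ⊢ <;> omega

theorem outCut_insert_add (G : Multiset (V × V)) (hvX : v ∉ X) :
    outCut G (insert v X) + G.countP (fun e => e.1 ∈ X ∧ e.2 = v)
      + G.countP (fun e => e.1 = v ∧ e.2 ∈ insert v X)
      = outCut G X + G.countP (fun e => e.1 = v) := by
  induction G using Multiset.induction_on with
  | empty => simp [outCut]
  | cons e G ih =>
    simp only [outCut, Multiset.countP_cons] at ih ⊢
    by_cases h1 : e.1 = v <;> by_cases h2 : e.1 ∈ X <;> by_cases h3 : e.2 = v <;>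
      by_cases h4 : e.2 ∈ X <;> simp [h1, h2, h3, h4] at ih ⊢ <;> grind

theorem IsEulerian.outCut_compl [Fintype V] (hG : IsEulerian G) (S : Finset V) :
    outCut G Sᶜ = outCut G S := by
  have key : G.countP (fun e => e.1 ∈ S) + outCut G Sᶜ =
      G.countP (fun e => e.2 ∈ S) + outCut G S := by
    clear hG
    induction G using Multiset.induction_on with
    | empty => simp [outCut]
    | cons e G ih =>
      simp only [outCut, Multiset.countP_cons] at ih ⊢
      by_cases h1 : e.1 ∈ S <;> by_cases h2 : e.2 ∈ S <;> simp [h1, h2] at ih ⊢ <;> omega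
  have := hG.countP_fst (· ∈ S)
  omega

theorem IsEulerian.outCut_sdiff_add_outCut_sdiff_lt [Fintype V] (hG : IsEulerian G) {e : V × V}
    (he : e ∈ G) (he₁ : e.1 ∉ X ∪ Y) (he₂ : e.2 ∈ X ∩ Y) :
    outCut G (X \ Y) + outCut G (Y \ X) < outCut G X + outCut G Y := by
  have key := outCut_add_outCut G X Yᶜ
  rw [hG.outCut_compl, show X ∪ Yᶜ = (Y \ X)ᶜ by ext; simp; tauto, hG.outCut_compl,
    show X ∩ Yᶜ = X \ Y by ext; simp] at key
  have : 0 < G.countP (fun e => e.1 ∈ Yᶜ \ X ∧ e.2 ∈ X \ Yᶜ) :=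
    Multiset.countP_pos.2 ⟨e, he, by simp_all⟩
  omega

theorem IsEulerian.outCut_insert_lt (hG : IsEulerian G) (hvX : v ∉ X)
    (hin : ∀ e ∈ G, e.2 = v → e.1 ∈ X) (huv : (v, u) ∈ G) (huX : u ∈ X) :
    outCut G (insert v X) < outCut G X := by
  have key := outCut_insert_add G hvX
  have hinX : G.countP (fun e => e.1 ∈ X ∧ e.2 = v) = G.countP (fun e => e.2 = v) :=
    Multiset.countP_congr rfl fun e he => propext ⟨And.right, fun h => ⟨hin e he h, h⟩⟩
  have hout : 0 < G.countP (fun e => e.1 = v ∧ e.2 ∈ insert v X) :=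
    Multiset.countP_pos.2 ⟨_, huv, by simp [huX]⟩
  have := hG.countP_fst (· = v)
  omega

theorem Separates.compl [Fintype V] {S : Finset V} (hS : Separates T S) : Separates T Sᶜ := by
  obtain ⟨⟨s, hs⟩, ⟨t, ht⟩⟩ := hS
  exact ⟨⟨t, by simp_all⟩, ⟨s, by simp_all⟩⟩

theorem Separates.insert (hX : Separates T X) (hvT : v ∉ T) : Separates T (insert v X) := by
  obtain ⟨hXT, ⟨t, ht⟩⟩ := hX
  refine ⟨hXT.mono (inter_subset_inter_right (subset_insert v X)), ⟨t, ?_⟩⟩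
  have : t ≠ v := by rintro rfl; exact hvT (mem_sdiff.1 ht).1
  simp_all

theorem Separates.union_inter (hX : Separates T X) (hY : Separates T Y) (hXY : X ∩ T ⊆ Y) :
    Separates T (X ∪ Y) ∧ Separates T (X ∩ Y) := by
  obtain ⟨hXT, hTX⟩ := hX
  obtain ⟨hYT, ⟨t, ht⟩⟩ := hY
  refine ⟨⟨hXT.mono (inter_subset_inter_right subset_union_left), ⟨t, ?_⟩⟩,
    ⟨?_, hTX.mono (sdiff_subset_sdiff le_rfl inter_subset_left)⟩⟩
  · have : t ∉ X := fun htX => (mem_sdiff.1 ht).2 (hXY (mem_inter.2 ⟨htX, (mem_sdiff.1 ht).1⟩))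
    simp_all
  · obtain ⟨s, hs⟩ := hXT
    exact ⟨s, by simp_all [hXY hs]⟩

theorem Separates.union_inter_or_sdiff (hX : Separates T X) (hY : Separates T Y) :
    (Separates T (X ∪ Y) ∧ Separates T (X ∩ Y)) ∨
      (Separates T (X \ Y) ∧ Separates T (Y \ X)) := by
  by_cases hXY : X ∩ T ⊆ Y
  · exact Or.inl (hX.union_inter hY hXY)
  by_cases hYX : Y ∩ T ⊆ X
  · rw [union_comm, inter_comm]
    exact Or.inl (hY.union_inter hX hYX)
  obtain ⟨s, hs⟩ := not_subset.1 hXY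
  obtain ⟨t, ht⟩ := not_subset.1 hYX
  exact Or.inr ⟨⟨⟨s, by simp_all⟩, hX.2.mono (sdiff_subset_sdiff le_rfl sdiff_subset)⟩,
    ⟨⟨t, by simp_all⟩, hY.2.mono (sdiff_subset_sdiff le_rfl sdiff_subset)⟩⟩

theorem isEdgeConnectedOn_iff : IsEdgeConnectedOn G T κ ↔
    ∀ s ∈ T, ∀ s' ∈ T, s ≠ s' → ∀ S : Finset V, s ∈ S → s' ∉ S → κ ≤ outCut G S := by
  refine ⟨fun h s hs s' hs' _ S hsS hs'S =>
    h S ⟨⟨s, mem_inter.2 ⟨hsS, hs⟩⟩, ⟨s', mem_sdiff.2 ⟨hs', hs'S⟩⟩⟩, ?_⟩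
  rintro h S ⟨⟨s, hs⟩, ⟨s', hs'⟩⟩
  rw [mem_inter] at hs
  rw [mem_sdiff] at hs'
  exact h s hs.2 s' hs'.1 (by rintro rfl; exact hs'.2 hs.1) S hs.1 hs'.2

theorem IsDangerous.union [Fintype V] (hG : IsEulerian G) (hconn : IsEdgeConnectedOn G T κ)
    (huv : (v, u) ∈ G) (hX : IsDangerous G T κ v u X) (hY : IsDangerous G T κ v u Y) :
    IsDangerous G T κ v u (X ∪ Y) := by
  obtain ⟨hXT, hvX, huX, hXκ⟩ := hX
  obtain ⟨hYT, hvY, huY, hYκ⟩ := hY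
  have hsub := outCut_add_outCut G X Y
  rcases hXT.union_inter_or_sdiff hYT with ⟨hU, hI⟩ | ⟨hXY, hYX⟩
  · have := hconn _ hI
    exact ⟨hU, by simp [hvX, hvY], mem_union_left _ huX, by omega⟩
  · have := hG.outCut_sdiff_add_outCut_sdiff_lt huv (by simp [hvX, hvY]) (mem_inter.2 ⟨huX, huY⟩)
    have := hconn _ hXY
    have := hconn _ hYX
    omega

theorem IsEulerian.exists_inNeighbor_not_mem_isDangerous [Fintype V] (hG : IsEulerian G)
    (hconn : IsEdgeConnectedOn G T κ) (hvT : v ∉ T) (huv : (v, u) ∈ G) :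
    ∃ w, (w, v) ∈ G ∧ ∀ X, IsDangerous G T κ v u X → w ∉ X := by
  classical
  by_contra! h
  obtain ⟨w₀, hw₀⟩ := hG.exists_snd_eq huv
  obtain ⟨X₀, hX₀, -⟩ := h w₀ hw₀
  obtain ⟨X, hX, hXmax⟩ := exists_max_image (univ.filter (IsDangerous G T κ v u)) card
    ⟨X₀, by simpa using hX₀⟩
  replace hX : IsDangerous G T κ v u X := (mem_filter.1 hX).2
  have hin : ∀ e ∈ G, e.2 = v → e.1 ∈ X := by
    rintro ⟨w, _⟩ he rfl
    obtain ⟨Y, hY, hwY⟩ := h w he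
    have hXY : X = X ∪ Y := eq_of_subset_of_card_le subset_union_left
      (hXmax _ (by simpa using hX.union hG hconn huv hY))
    exact hXY ▸ mem_union_right X hwY
  obtain ⟨hXT, hvX, huX, hXκ⟩ := hX
  have := hconn _ (hXT.insert hvT)
  have := hG.outCut_insert_lt hvX hin huv huX
  omega

theorem IsEdgeConnectedOn.splitOff [Fintype V] (hG : IsEulerian ((v, u) ::ₘ (w, v) ::ₘ G))
    (hconn : IsEdgeConnectedOn ((v, u) ::ₘ (w, v) ::ₘ G) T κ)
    (hw : ∀ X, IsDangerous ((v, u) ::ₘ (w, v) ::ₘ G) T κ v u X → w ∉ X) :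
    IsEdgeConnectedOn ((w, u) ::ₘ G) T κ := by
  intro S hS
  wlog hvS : v ∉ S generalizing S
  · rw [← hG.splitOff.outCut_compl]
    exact this _ hS.compl (by simpa using hvS)
  have hcut := hconn S hS
  have hsafe : w ∈ S → u ∈ S → κ < outCut ((v, u) ::ₘ (w, v) ::ₘ G) S := fun hwS huS =>
    not_le.1 fun hle => hw S ⟨hS, hvS, huS, hle⟩ hwS
  simp only [outCut_cons] at hcut hsafe ⊢
  by_cases hwS : w ∈ S <;> by_cases huS : u ∈ S <;> simp [hvS, hwS, huS] at hcut hsafe ⊢ <;> omega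

end Cuts

section Routing

variable {V E : Type*} (ends : E → V × V)

/-- Each entry `((s, t), P)` is an edge `s → t` of the current multigraph together with the
walk `P` of the original multigraph `ends` that it unfolds to. -/
def IsDisjointRouting (R : Multiset ((V × V) × List E)) : Prop :=
  (∀ x ∈ R, IsDiwalk ends x.2 x.1.1 x.1.2) ∧ (R.bind fun x => (x.2 : Multiset E)).Nodup

variable {ends} {R : Multiset ((V × V) × List E)}

theorem IsDiwalk.append :
    ∀ {l₁ l₂ : List E} {x y z : V}, IsDiwalk ends l₁ x y → IsDiwalk ends l₂ y z →
      IsDiwalk ends (l₁ ++ l₂) x z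
  | [], _, _, _, _, rfl, h₂ => h₂
  | _ :: _, _, _, _, _, ⟨h, h₁⟩, h₂ => ⟨h, h₁.append h₂⟩

theorem isDisjointRouting_singleton {s : Multiset E} (hs : s.Nodup) :
    IsDisjointRouting ends (s.map fun e => (ends e, [e])) := by
  refine ⟨by simp [IsDiwalk], ?_⟩
  rw [Multiset.bind_map]
  simp only [Multiset.coe_singleton]
  rwa [Multiset.bind_singleton s fun e => e, Multiset.map_id']

theorem IsDisjointRouting.of_cons {x : (V × V) × List E} (h : IsDisjointRouting ends (x ::ₘ R)) :
    IsDisjointRouting ends R := by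
  refine ⟨fun y hy => h.1 y (Multiset.mem_cons_of_mem hy), ?_⟩
  have := h.2
  rw [Multiset.cons_bind] at this
  exact (Multiset.nodup_add.1 this).2.1

theorem IsDisjointRouting.splitOff {u v w : V} {P Q : List E}
    (h : IsDisjointRouting ends (((v, u), P) ::ₘ ((w, v), Q) ::ₘ R)) :
    IsDisjointRouting ends (((w, u), Q ++ P) ::ₘ R) := by
  obtain ⟨hwalk, hnodup⟩ := h
  refine ⟨?_, ?_⟩
  · simp only [Multiset.mem_cons, forall_eq_or_imp] at hwalk ⊢
    exact ⟨hwalk.2.1.append hwalk.1, hwalk.2.2⟩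
  · rw [Multiset.cons_bind, Multiset.cons_bind, ← add_assoc, add_comm (P : Multiset E),
      Multiset.coe_add] at hnodup
    rwa [Multiset.cons_bind]

theorem IsDisjointRouting.nodup_flatMap_toList (h : IsDisjointRouting ends R) :
    (R.toList.flatMap Prod.snd).Nodup := by
  have := h.2
  rwa [← Multiset.coe_toList R, Multiset.coe_bind, Multiset.coe_nodup] at this

theorem IsDisjointRouting.nodup_getElem_toList (h : IsDisjointRouting ends R)
    (i : Fin R.toList.length) : R.toList[i].2.Nodup :=
  (List.nodup_flatMap.1 h.nodup_flatMap_toList).1 _ (List.getElem_mem _)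

theorem IsDisjointRouting.disjoint_getElem_toList (h : IsDisjointRouting ends R)
    {i j : Fin R.toList.length} (hij : i ≠ j) : R.toList[i].2.Disjoint R.toList[j].2 := by
  have hpair := (List.nodup_flatMap.1 h.nodup_flatMap_toList).2
  rcases lt_or_gt_of_ne hij with hlt | hlt
  · exact hpair.rel_get_of_lt hlt
  · exact fun e hi hj => hpair.rel_get_of_lt hlt hj hi

variable [DecidableEq V]

theorem card_filter_toList_eq_outCut {α : Type*} (R : Multiset ((V × V) × α)) (S : Finset V) :
    #{i : Fin R.toList.length | R.toList[i].1.1 ∈ S ∧ R.toList[i].1.2 ∉ S}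
      = outCut (R.map Prod.fst) S := by
  rw [Fin.card_filter_univ_getElem R.toList fun x => x.1.1 ∈ S ∧ x.1.2 ∉ S,
    ← Multiset.coe_countP, Multiset.coe_toList, outCut_map]

variable [Fintype V] {T : Finset V} {κ : ℕ}

theorem IsDisjointRouting.exists_card_lt (hR : IsDisjointRouting ends R)
    (hE : IsEulerian (R.map Prod.fst)) (hconn : IsEdgeConnectedOn (R.map Prod.fst) T κ)
    {v u : V} (hvT : v ∉ T) (huv : (v, u) ∈ R.map Prod.fst) :
    ∃ R' : Multiset ((V × V) × List E), R'.card < R.card ∧ IsDisjointRouting ends R' ∧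
      IsEulerian (R'.map Prod.fst) ∧ IsEdgeConnectedOn (R'.map Prod.fst) T κ := by
  obtain ⟨⟨_, P⟩, hx, rfl⟩ := Multiset.mem_map.1 huv
  obtain ⟨R₀, rfl⟩ := Multiset.exists_cons_of_mem hx
  rw [Multiset.map_cons] at hE hconn
  by_cases hloop : u = v
  · subst hloop
    refine ⟨R₀, by simp, hR.of_cons, hE.of_cons_self, fun S hS => ?_⟩
    simpa [outCut_cons_self] using hconn S hS
  obtain ⟨w, hwv, hw⟩ := hE.exists_inNeighbor_not_mem_isDangerous hconn hvT
    (Multiset.mem_cons_self _ _)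
  have hwv₀ : (w, v) ∈ R₀.map Prod.fst := by
    rcases Multiset.mem_cons.1 hwv with h | h
    · exact absurd (Prod.ext_iff.1 h).2 (Ne.symm hloop)
    · exact h
  obtain ⟨⟨_, Q⟩, hy, rfl⟩ := Multiset.mem_map.1 hwv₀
  obtain ⟨R₁, rfl⟩ := Multiset.exists_cons_of_mem hy
  rw [Multiset.map_cons] at hE hconn hw
  refine ⟨((w, u), Q ++ P) ::ₘ R₁, by simp, hR.splitOff, ?_, ?_⟩ <;>
    rw [Multiset.map_cons]
  · exact hE.splitOff
  · exact hconn.splitOff hE hw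

theorem IsDisjointRouting.exists_terminal (hR : IsDisjointRouting ends R)
    (hE : IsEulerian (R.map Prod.fst)) (hconn : IsEdgeConnectedOn (R.map Prod.fst) T κ) :
    ∃ R' : Multiset ((V × V) × List E), IsDisjointRouting ends R' ∧
      IsEdgeConnectedOn (R'.map Prod.fst) T κ ∧ ∀ x ∈ R', x.1.1 ∈ T ∧ x.1.2 ∈ T := by
  induction hn : R.card using Nat.strong_induction_on generalizing R with
  | _ n ih =>
  by_cases hT : ∀ x ∈ R, x.1.1 ∈ T ∧ x.1.2 ∈ T
  · exact ⟨R, hR, hconn, hT⟩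
  push Not at hT
  obtain ⟨x, hx, hxT⟩ := hT
  have hxG := Multiset.mem_map_of_mem Prod.fst hx
  obtain ⟨v, hvT, u, huv⟩ : ∃ v ∉ T, ∃ u, (v, u) ∈ R.map Prod.fst := by
    by_cases h₁ : x.1.1 ∈ T
    · exact ⟨x.1.2, hxT h₁, hE.exists_fst_eq hxG⟩
    · exact ⟨x.1.1, h₁, x.1.2, hxG⟩
  obtain ⟨R', hlt, hR', hE', hconn'⟩ := hR.exists_card_lt hE hconn hvT huv
  exact ih _ (hn ▸ hlt) hR' hE' hconn' rfl

end Routing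

theorem stmt_17_general {V E : Type*} [Fintype V] [DecidableEq V] [Fintype E]
    (ends : E → V × V) (T : Finset V) (κ : ℕ)
    (heuler : ∀ v, (univ.filter fun e => (ends e).1 = v).card =
      (univ.filter fun e => (ends e).2 = v).card)
    (hconn : ∀ s ∈ T, ∀ s' ∈ T, s ≠ s' → ∀ S : Finset V, s ∈ S → s' ∉ S →
      κ ≤ (univ.filter fun e => (ends e).1 ∈ S ∧ (ends e).2 ∉ S).card) :
    ∃ (n : ℕ) (h : Fin n → V × V) (p : Fin n → List E),
      (∀ f, (h f).1 ∈ T ∧ (h f).2 ∈ T) ∧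
      (∀ f, IsDiwalk ends (p f) (h f).1 (h f).2) ∧
      (∀ f, (p f).Nodup) ∧
      (∀ f g, f ≠ g → ∀ e, e ∈ p f → e ∉ p g) ∧
      (∀ s ∈ T, ∀ s' ∈ T, s ≠ s' → ∀ S : Finset V, s ∈ S → s' ∉ S →
        κ ≤ (univ.filter fun f => (h f).1 ∈ S ∧ (h f).2 ∉ S).card) := by
  have hD : (univ.val.map fun e => (ends e, [e])).map Prod.fst = univ.val.map ends := by
    simp [Multiset.map_map]
  have hE : IsEulerian (univ.val.map ends) := by
    rw [isEulerian_iff_countP]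
    simpa [Multiset.countP_map_univ] using heuler
  have hconnD : IsEdgeConnectedOn (univ.val.map ends) T κ := by
    rw [isEdgeConnectedOn_iff]
    simpa [outCut, Multiset.countP_map_univ] using hconn
  obtain ⟨R, hR, hconnR, hT⟩ :=
    (isDisjointRouting_singleton univ.nodup).exists_terminal (hD ▸ hE) (hD ▸ hconnD)
  have hmem (i : Fin R.toList.length) : R.toList[i] ∈ R :=
    Multiset.mem_toList.1 (List.getElem_mem _)
  refine ⟨R.toList.length, fun i => R.toList[i].1, fun i => R.toList[i].2,
    fun i => hT _ (hmem i), fun i => hR.1 _ (hmem i), hR.nodup_getElem_toList,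
    fun i j hij => hR.disjoint_getElem_toList hij, ?_⟩
  simpa only [card_filter_toList_eq_outCut] using isEdgeConnectedOn_iff.1 hconnR

/-- Directed splitting-off (Frank/Jackson): let `D` be a directed Eulerian multigraph,
`T` a set of special vertices, and suppose every ordered pair of distinct special
vertices has `κ` edge-disjoint directed paths (equivalently, every directed cut
separating them has at least `κ` edges).  Then there is a directed multigraph `H̃` on
the special vertices (given by `n` edges with endpoint map `h`), whose every ordered
pair of distinct special vertices is `κ`-edge-connected, together with directed paths
in `D`, one for each edge of `H̃`, that are pairwise edge-disjoint. -/
theorem stmt_17 {V E : Type*} [Fintype V] [DecidableEq V] [Fintype E] [DecidableEq E]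
    (ends : E → V × V) (T : Finset V) (κ : ℕ)
    (heuler : ∀ v, (univ.filter fun e => (ends e).1 = v).card =
      (univ.filter fun e => (ends e).2 = v).card)
    (hconn : ∀ s ∈ T, ∀ s' ∈ T, s ≠ s' → ∀ S : Finset V, s ∈ S → s' ∉ S →
      κ ≤ (univ.filter fun e => (ends e).1 ∈ S ∧ (ends e).2 ∉ S).card) :
    ∃ (n : ℕ) (h : Fin n → V × V) (p : Fin n → List E),
      (∀ f, (h f).1 ∈ T ∧ (h f).2 ∈ T) ∧
      (∀ f, IsDiwalk ends (p f) (h f).1 (h f).2) ∧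
      (∀ f, (p f).Nodup) ∧
      (∀ f g, f ≠ g → ∀ e, e ∈ p f → e ∉ p g) ∧
      (∀ s ∈ T, ∀ s' ∈ T, s ≠ s' → ∀ S : Finset V, s ∈ S → s' ∉ S →
        κ ≤ (univ.filter fun f => (h f).1 ∈ S ∧ (h f).2 ∉ S).card) :=
  stmt_17_general ends T κ heuler hconn
end
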